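/- arXiv:2603.02607 — 8 statements merged into one kernel-verified Lean document; each statement's English description precedes it below -/
import Mathlib

section
/- For any d ∈ ℕ, there exists an orthonormal basis {u₁, …, u_d} of ℝ^d such that u₁ = (1/√d)·𝟙_d (the normalized all-ones vector) and ⟨u_i, e₁⟩ = 1/√d for every i ∈ {2, …, d}. -/
/-- For any `d > 0` there is an orthonormal basis `u 0, …, u (d-1)` of `ℝ^d`
(`d` pairwise-orthonormal vectors) such that `u 0` is the normalized all-ones
vector `(1/√d)·𝟙` and every other basis vector has inner product `1/√d` with
the first standard basis vector `e₁` (coordinate `0`). -/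
theorem exists_orthonormal_basis_ones_first (d : ℕ) (hd : 0 < d) :
    ∃ u : Fin d → Fin d → ℝ,
      (∀ i j, ∑ l, u i l * u j l = if i = j then 1 else 0) ∧
      (u ⟨0, hd⟩ = fun _ => (Real.sqrt d)⁻¹) ∧
      (∀ i, i ≠ ⟨0, hd⟩ → u i ⟨0, hd⟩ = (Real.sqrt d)⁻¹) := by
  set s : ℝ := (Real.sqrt d)⁻¹ with hs
  set z : Fin d := ⟨0, hd⟩ with hz
  set e : Fin d → ℝ := fun l => if l = z then 1 else 0 with he
  set x : Fin d → ℝ := fun l => e l - s with hx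
  set S : ℝ := ∑ l, x l ^ 2 with hS
  set c : ℝ := 2 / S with hc
  have hdpos : (0:ℝ) < d := Nat.cast_pos.mpr hd
  have hsd : 0 < Real.sqrt d := Real.sqrt_pos.mpr hdpos
  have hsq : (Real.sqrt d) ^ 2 = d := Real.sq_sqrt hdpos.le
  have hds2 : (d:ℝ) * s ^ 2 = 1 := by
    rw [hs, inv_pow, hsq]
    field_simp
  have hse : ∑ l, e l = 1 := by
    simp [he]
  have hSval : S = 2 - 2 * s := by
    have h1 : ∀ l, x l ^ 2 = e l - 2 * s * e l + s ^ 2 := by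
      intro l
      simp only [hx, he]
      split <;> ring
    rw [hS]
    simp only [h1]
    rw [Finset.sum_add_distrib, Finset.sum_sub_distrib, ← Finset.mul_sum, hse,
      Finset.sum_const, Finset.card_univ, Fintype.card_fin, nsmul_eq_mul, hds2]
    ring
  -- key fact for orthonormality
  have hkey : c ^ 2 * S - 2 * c = 0 := by
    by_cases h : S = 0
    · simp [hc, h]
    · rw [hc]; field_simp; ring
  -- key fact for first-row/column computations
  have hkey2 : c * (1 - s) ^ 2 = 1 - s := by
    by_cases h : s = 1
    · simp [h]
    · have hS0 : S ≠ 0 := by rw [hSval]; intro h'; apply h; linarith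
      rw [hc, hSval]
      have : (2 : ℝ) - 2 * s ≠ 0 := by rw [hSval] at hS0; exact hS0
      field_simp
  have hslt : 1 < d → s < 1 := by
    intro h1
    have : 1 < Real.sqrt d := by
      rw [show (1:ℝ) = Real.sqrt 1 by simp]
      exact Real.sqrt_lt_sqrt (by norm_num) (by exact_mod_cast h1)
    rw [hs]
    rw [inv_lt_one_iff₀]
    right; exact this
  have hc1 : 1 < d → c * (1 - s) = 1 := by
    intro h1
    have hlt := hslt h1
    have h1s : (1:ℝ) - s ≠ 0 := by intro h'; linarith
    have := hkey2
    field_simp at this ⊢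
    nlinarith [this]
  refine ⟨fun i j => (if i = j then 1 else 0) - c * x i * x j, ?_, ?_, ?_⟩
  · intro i j
    have expand : ∀ l : Fin d,
        ((if i = l then (1:ℝ) else 0) - c * x i * x l) *
          ((if j = l then (1:ℝ) else 0) - c * x j * x l)
        = (if i = l then (1:ℝ) else 0) * (if j = l then (1:ℝ) else 0)
          - c * x j * ((if i = l then (1:ℝ) else 0) * x l)
          - c * x i * ((if j = l then (1:ℝ) else 0) * x l)
          + (c * x i) * (c * x j) * x l ^ 2 := by
      intro l; ring
    simp only [expand]
    rw [Finset.sum_add_distrib, Finset.sum_sub_distrib, Finset.sum_sub_distrib,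
      ← Finset.mul_sum, ← Finset.mul_sum, ← Finset.mul_sum, ← hS]
    have h1 : ∑ l, (if i = l then (1:ℝ) else 0) * (if j = l then (1:ℝ) else 0)
        = if i = j then 1 else 0 := by
      simp [ite_and, mul_ite, mul_one, mul_zero, Finset.sum_ite_eq]
    have h2 : ∑ l, (if i = l then (1:ℝ) else 0) * x l = x i := by
      simp [ite_mul, Finset.sum_ite_eq]
    have h3 : ∑ l, (if j = l then (1:ℝ) else 0) * x l = x j := by
      simp [ite_mul, Finset.sum_ite_eq]
    rw [h1, h2, h3]
    linear_combination x i * x j * hkey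
  · funext j
    have hxz : x z = 1 - s := by simp [hx, he]
    by_cases hj : z = j
    · subst hj
      simp only [if_pos rfl, if_true, hxz]
      linear_combination -hkey2
    · have hxj : x j = -s := by
        simp only [hx, he]
        rw [if_neg (Ne.symm hj)]
        ring
      have h1 : 1 < d := by
        by_contra h
        push_neg at h
        have hd1 : d = 1 := le_antisymm h hd
        apply hj
        subst hd1
        exact Subsingleton.elim z j
      simp only [if_neg hj, hxz, hxj]
      linear_combination s * hc1 h1
  · intro i hi
    have hxz : x z = 1 - s := by simp [hx, he]
    have hxi : x i = -s := by
      simp only [hx, he]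
      rw [if_neg hi]
      ring
    have h1 : 1 < d := by
      by_contra h
      push_neg at h
      have hd1 : d = 1 := le_antisymm h hd
      apply hi
      subst hd1
      exact Subsingleton.elim i z
    simp only [if_neg hi, hxz, hxi]
    linear_combination s * hc1 h1
end

section
/- Let Σ be a positive semidefinite d×d matrix with eigenvalues λ₁ ≥ λ₂ ≥ … ≥ λ_d ≥ 0 and λ₁ > 0. For every β with 0 < β ≤ γ (where γ ∈ (0,1) and λ_{k+1} ≤ (1−γ)λ_k for some k ∈ [d−1]), there exists p ∈ [k] such that λ_p ≥ (1−β)·λ₁ and λ_{p+1} ≤ (1 − β/k)·λ_p. -/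
/-!
Suppose no index works. Then, as long as `lam p ≥ (1 - β) lam 1`, each step from `p` to
`p + 1` loses less than a factor `1 - β / k`, so `lam p ≥ (1 - β / k) ^ (p - 1) lam 1`,
and by Bernoulli's inequality this lower bound stays above `(1 - β) lam 1` up to `p = k`.
Hence the step from `k` to `k + 1` also loses less than `1 - β / k ≥ 1 - γ`, contradicting
the assumed gap `lam (k + 1) ≤ (1 - γ) lam k`.
-/

lemma one_sub_le_one_sub_div_pow {β : ℝ} {j k : ℕ} (hβ : 0 ≤ β) (hβk : β ≤ 2 * k)
    (hj : j ≤ k) : 1 - β ≤ (1 - β / k) ^ j := by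
  rcases Nat.eq_zero_or_pos k with rfl | hk
  · obtain rfl : j = 0 := Nat.le_zero.mp hj
    simpa using hβ
  have hk' : (0 : ℝ) < k := by exact_mod_cast hk
  have hjk : (j : ℝ) * (β / k) ≤ β := by
    calc (j : ℝ) * (β / k) ≤ k * (β / k) := by gcongr
      _ = β := mul_div_cancel₀ β hk'.ne'
  have hβk' : -2 ≤ -(β / k) := by
    rw [neg_le_neg_iff, div_le_iff₀ hk']
    exact hβk
  calc 1 - β ≤ 1 + j * -(β / k) := by linarith
    _ ≤ (1 + -(β / k)) ^ j := one_add_mul_le_pow hβk' j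
    _ = (1 - β / k) ^ j := by rw [← sub_eq_add_neg]

lemma pow_mul_le_of_forall_mul_le {u : ℕ → ℝ} {r t : ℝ} {n : ℕ} (hr : 0 ≤ r) (hu : 0 ≤ u 0)
    (ht : ∀ j ≤ n, t ≤ r ^ j) (hstep : ∀ j < n, t * u 0 ≤ u j → r * u j ≤ u (j + 1)) :
    ∀ j ≤ n, r ^ j * u 0 ≤ u j := by
  intro j
  induction j with
  | zero => simp
  | succ j ih =>
    intro hj
    have hpow : r ^ j * u 0 ≤ u j := ih (by omega)
    have habove : t * u 0 ≤ u j :=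
      (mul_le_mul_of_nonneg_right (ht j (by omega)) hu).trans hpow
    calc r ^ (j + 1) * u 0 = r * (r ^ j * u 0) := by ring
      _ ≤ r * u j := mul_le_mul_of_nonneg_left hpow hr
      _ ≤ u (j + 1) := hstep j (by omega) habove

theorem exists_eigengap_general (k : ℕ) (hk1 : 1 ≤ k)
    (lam : ℕ → ℝ)
    (hpos : 0 < lam 1)
    (γ : ℝ) (hγ : γ ∈ Set.Ioo (0 : ℝ) 1)
    (hgap : lam (k + 1) ≤ (1 - γ) * lam k)
    (β : ℝ) (hβ0 : 0 < β) (hβγ : β ≤ γ) :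
    ∃ p, 1 ≤ p ∧ p ≤ k ∧ (1 - β) * lam 1 ≤ lam p ∧
      lam (p + 1) ≤ (1 - β / k) * lam p := by
  have hk : (1 : ℝ) ≤ k := by exact_mod_cast hk1
  have hβ1 : β < 1 := hβγ.trans_lt hγ.2
  have hβk : β / k ≤ β := div_le_self hβ0.le hk
  have hpow : ∀ j ≤ k, 1 - β ≤ (1 - β / k) ^ j := fun j hj =>
    one_sub_le_one_sub_div_pow hβ0.le (by linarith) hj
  by_contra! hbad
  have hgrowth := pow_mul_le_of_forall_mul_le (u := fun j => lam (j + 1)) (n := k - 1)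
    (by linarith) hpos.le (fun j hj => hpow j (by omega))
    (fun j hj h => (hbad (j + 1) (by omega) (by omega) h).le) (k - 1) le_rfl
  simp only [Nat.sub_add_cancel hk1, zero_add] at hgrowth
  have hlamk : (1 - β) * lam 1 ≤ lam k :=
    (mul_le_mul_of_nonneg_right (hpow _ (Nat.sub_le k 1)) hpos.le).trans hgrowth
  have hlamk_nonneg : 0 ≤ lam k := (mul_nonneg (by linarith) hpos.le).trans hlamk
  have hratio : (1 - γ) * lam k ≤ (1 - β / k) * lam k :=
    mul_le_mul_of_nonneg_right (by linarith) hlamk_nonneg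
  linarith [hbad k hk1 le_rfl hlamk]

/-- Let `lam 1 ≥ lam 2 ≥ … ≥ lam d ≥ 0` be the ordered eigenvalues of a PSD
matrix with `lam 1 > 0`, and suppose `lam (k+1) ≤ (1−γ)·lam k` for some
`k ∈ [d−1]` and `γ ∈ (0,1)`. Then for every `β` with `0 < β ≤ γ` there exists
`p ∈ [k]` with `lam p ≥ (1−β)·lam 1` and `lam (p+1) ≤ (1 − β/k)·lam p`. -/
theorem exists_eigengap (d k : ℕ) (hk1 : 1 ≤ k) (hkd : k + 1 ≤ d)
    (lam : ℕ → ℝ)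
    (hdec : ∀ i, 1 ≤ i → i < d → lam (i + 1) ≤ lam i)
    (hnonneg : ∀ i, 1 ≤ i → i ≤ d → 0 ≤ lam i)
    (hpos : 0 < lam 1)
    (γ : ℝ) (hγ : γ ∈ Set.Ioo (0 : ℝ) 1)
    (hgap : lam (k + 1) ≤ (1 - γ) * lam k)
    (β : ℝ) (hβ0 : 0 < β) (hβγ : β ≤ γ) :
    ∃ p, 1 ≤ p ∧ p ≤ k ∧ (1 - β) * lam 1 ≤ lam p ∧
      lam (p + 1) ≤ (1 - β / k) * lam p :=
  exists_eigengap_general k hk1 lam hpos γ hγ hgap β hβ0 hβγ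
end

section
/- Let u, v ∈ ℝ^d be unit vectors with v having at most s nonzero entries, and let r ∈ [d] with r ≥ s. Let top_r(u) denote u with all but its r largest-magnitude coordinates zeroed out. Then ||⟨top_r(u), v⟩| − |⟨u, v⟩|| ≤ √(s/r) · min{ √(1 − ⟨u,v⟩²), (1 + √(s/r))·(1 − ⟨u,v⟩²) }. -/
open Finset

private lemma two_sqrt_le {a b : ℝ} (ha : 0 ≤ a) (hb : 0 ≤ b) :
    2 * Real.sqrt (a * b) ≤ a + b := by
  rw [Real.sqrt_mul ha]
  nlinarith [sq_nonneg (Real.sqrt a - Real.sqrt b), Real.sq_sqrt ha, Real.sq_sqrt hb,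
    Real.sqrt_nonneg a, Real.sqrt_nonneg b]

private lemma cauchy_two {x₁ y₁ x₂ y₂ : ℝ} (hx₁ : 0 ≤ x₁) (hy₁ : 0 ≤ y₁)
    (hx₂ : 0 ≤ x₂) (hy₂ : 0 ≤ y₂) :
    (Real.sqrt (x₁ * y₁) + Real.sqrt (x₂ * y₂))^2 ≤ (x₁ + x₂) * (y₁ + y₂) := by
  have h1 : Real.sqrt (x₁*y₁) * Real.sqrt (x₂*y₂) = Real.sqrt ((x₁*y₂) * (x₂*y₁)) := by
    rw [← Real.sqrt_mul (by positivity)]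
    ring_nf
  have h2 : 2 * (Real.sqrt (x₁*y₁) * Real.sqrt (x₂*y₂)) ≤ x₁*y₂ + x₂*y₁ := by
    rw [h1]; exact two_sqrt_le (by positivity) (by positivity)
  nlinarith [Real.sq_sqrt (mul_nonneg hx₁ hy₁), Real.sq_sqrt (mul_nonneg hx₂ hy₂)]

private lemma lemA {m t g β K : ℝ} (hm : 0 ≤ m) (ht : 0 ≤ t) (hg : 0 ≤ g)
    (hβ0 : 0 ≤ β) (hβ1 : β ≤ 1) (hsum : m + g + t ≤ 1) (hK : 1 ≤ K)
    (hKt : K * t ≤ g) :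
    (Real.sqrt (m * (1 - β)) + Real.sqrt (t * β))^2 + K * (t * β) ≤ 1 := by
  have ht_g : t ≤ g := le_trans (by nlinarith) hKt
  rcases eq_or_lt_of_le hg with hg0 | hgpos
  · have ht0 : t = 0 := le_antisymm (hg0 ▸ ht_g) ht
    rw [ht0]
    simp only [zero_mul, Real.sqrt_zero, add_zero, mul_zero]
    rw [Real.sq_sqrt (by nlinarith)]
    nlinarith
  · have hX : (0:ℝ) ≤ m * (1 - β) := by nlinarith
    have hY : (0:ℝ) ≤ t * β := by positivity
    have hprod : (g*(1-β)) * (t*β*m/g) = (m*(1-β))*(t*β) := by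
      field_simp
    have hcross : 2 * (Real.sqrt (m*(1-β)) * Real.sqrt (t*β)) ≤ g*(1-β) + t*β*m/g := by
      rw [← Real.sqrt_mul hX, ← hprod]
      exact two_sqrt_le (by nlinarith) (by positivity)
    have h1 : t*β*m/g ≤ β*m := by
      rw [div_le_iff₀ hgpos]
      nlinarith [mul_nonneg (sub_nonneg.mpr ht_g) (mul_nonneg hβ0 hm)]
    have h2 : K * t * β ≤ g * β := by nlinarith
    nlinarith [Real.sq_sqrt hX, Real.sq_sqrt hY]

private lemma lemB' {x c ρ w : ℝ} (hx0 : 0 ≤ x) (hc0 : 0 ≤ c) (hw : 0 < w)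
    (hw1 : w ≤ 1) (hρ0 : 0 ≤ ρ) (hρ2 : ρ^2 = 1 + w^2)
    (hkey : c + (ρ/w) * x ≤ 1) :
    x ≤ w * (1 + w) * (1 - (c + x)^2) := by
  have hρw : w < ρ := by nlinarith [sq_nonneg (ρ - w), sq_nonneg (ρ + w)]
  have hρx : w * c + ρ * x ≤ w := by
    have h := mul_le_mul_of_nonneg_left hkey hw.le
    have he : w * (c + ρ/w * x) = w * c + ρ * x := by
      field_simp
    rw [he, mul_one] at h
    exact h
  have hwx : w * x ≤ ρ * x := mul_le_mul_of_nonneg_right hρw.le hx0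
  have hC1 : c + x ≤ 1 := by
    have h2 : w * (c + x) ≤ w * 1 := by nlinarith
    exact le_of_mul_le_mul_left h2 hw
  have h1C : (ρ - w) * x ≤ w * (1 - (c + x)) := by nlinarith
  rcases le_or_gt (c + x) (w/(1+w)) with hcase | hcase
  · -- small C case
    have hCw : (c + x) * (1 + w) ≤ w := by
      rw [← le_div_iff₀ (by linarith : (0:ℝ) < 1 + w)]
      exact hcase
    have hsq : ((c + x) * (1 + w))^2 ≤ w^2 := by
      nlinarith [mul_nonneg (add_nonneg hc0 hx0) (by linarith : (0:ℝ) ≤ 1 + w)]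
    have h7 : w * ((c + x) * (1 + w))^2 ≤ w * w^2 :=
      mul_le_mul_of_nonneg_left hsq hw.le
    have h6 : x * (1 + w) ≤ w := by nlinarith
    have hgoal' : x * (1 + w) ≤ (w * (1 + w) * (1 - (c + x)^2)) * (1 + w) := by
      nlinarith [h7, h6, sq_nonneg w]
    exact le_of_mul_le_mul_right hgoal' (by linarith)
  · -- large C case
    have hρkey : 1 ≤ (1 + 2*w) * (ρ - w) := by
      have hP : (1 + w + 2*w^2) ≤ (1 + 2*w) * ρ := by
        have hP2 : ((1 + 2*w) * ρ)^2 = (1 + 2*w)^2 * (1 + w^2) := by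
          rw [mul_pow, hρ2]
        have hQ2 : (1 + w + 2*w^2)^2 ≤ ((1 + 2*w) * ρ)^2 := by
          rw [hP2]; nlinarith [hw.le]
        calc (1 + w + 2*w^2) = Real.sqrt ((1 + w + 2*w^2)^2) :=
              (Real.sqrt_sq (by positivity)).symm
          _ ≤ Real.sqrt (((1 + 2*w) * ρ)^2) := Real.sqrt_le_sqrt hQ2
          _ = (1 + 2*w) * ρ := Real.sqrt_sq (mul_nonneg (by linarith) hρ0)
      nlinarith
    have hC2 : 1 + 2*w ≤ (1 + w) * (1 + (c + x)) := by
      have h3 : w ≤ (1 + w) * (c + x) := by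
        rw [← div_le_iff₀' (by linarith : (0:ℝ) < 1 + w)]
        exact hcase.le
      nlinarith
    calc x = x * 1 := (mul_one x).symm
      _ ≤ x * ((1 + 2*w) * (ρ - w)) := mul_le_mul_of_nonneg_left hρkey hx0
      _ = (1 + 2*w) * ((ρ - w) * x) := by ring
      _ ≤ (1 + 2*w) * (w * (1 - (c + x))) := by
          apply mul_le_mul_of_nonneg_left h1C (by linarith)
      _ ≤ ((1 + w) * (1 + (c + x))) * (w * (1 - (c + x))) := by
          apply mul_le_mul_of_nonneg_right hC2
          exact mul_nonneg hw.le (by linarith)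
      _ = w * (1 + w) * (1 - (c + x)^2) := by ring

private lemma lemB {m t β w : ℝ} (hm : 0 ≤ m) (ht : 0 ≤ t) (hβ0 : 0 ≤ β) (hβ1 : β ≤ 1)
    (hw : 0 < w) (hw1 : w ≤ 1) (hsum : m + t + t / w^2 ≤ 1) :
    Real.sqrt (t * β) ≤ w * (1 + w) *
      (1 - (Real.sqrt (m * (1 - β)) + Real.sqrt (t * β))^2) := by
  have hx0 : 0 ≤ Real.sqrt (t*β) := Real.sqrt_nonneg _
  have hc0 : 0 ≤ Real.sqrt (m*(1-β)) := Real.sqrt_nonneg _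
  have hρ2 : (Real.sqrt (1 + w^2))^2 = 1 + w^2 := Real.sq_sqrt (by positivity)
  have hρ0 : 0 ≤ Real.sqrt (1 + w^2) := Real.sqrt_nonneg _
  apply lemB' hx0 hc0 hw hw1 hρ0 hρ2
  -- goal : √(m*(1-β)) + √(1+w²)/w * √(t*β) ≤ 1
  have hbig : (0:ℝ) ≤ (Real.sqrt (1 + w^2))^2/w^2 * t := by positivity
  have h1 : Real.sqrt (((Real.sqrt (1 + w^2))^2/w^2 * t) * β) =
      Real.sqrt (1 + w^2)/w * Real.sqrt (t*β) := by
    rw [show ((Real.sqrt (1 + w^2))^2/w^2 * t) * β =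
        (Real.sqrt (1 + w^2)/w)^2 * (t*β) by ring]
    rw [Real.sqrt_mul (sq_nonneg (Real.sqrt (1 + w^2)/w))]
    rw [Real.sqrt_sq (by positivity)]
  have h3 := cauchy_two hm (by linarith : (0:ℝ) ≤ 1 - β) hbig hβ0
  have he : (Real.sqrt (1 + w^2))^2/w^2 * t = t + t/w^2 := by
    rw [hρ2]
    field_simp
    ring
  have h4 : (m + (Real.sqrt (1 + w^2))^2/w^2 * t) * ((1-β) + β) ≤ 1 := by
    rw [he]
    nlinarith
  have h5 : (Real.sqrt (m*(1-β)) +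
      Real.sqrt (((Real.sqrt (1 + w^2))^2/w^2 * t) * β))^2 ≤ 1 := le_trans h3 h4
  rw [← h1]
  nlinarith [h5, Real.sqrt_nonneg (((Real.sqrt (1 + w^2))^2/w^2 * t) * β), hc0]

private lemma assemble {m t g β a D K w : ℝ}
    (hm0 : 0 ≤ m) (ht0 : 0 ≤ t) (hg0 : 0 ≤ g) (hβ0 : 0 ≤ β) (hβ1 : β ≤ 1)
    (hsum1 : m + g + t ≤ 1) (hK1 : 1 ≤ K) (hKt : K * t ≤ g)
    (ha2 : a^2 ≤ m * (1 - β)) (hD2 : D^2 ≤ t * β)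
    (hw : 0 < w) (hw1 : w ≤ 1) (hwK : w^2 * K = 1) :
    |(|a| - |a + D|)| ≤
      w * min (Real.sqrt (1 - (a + D)^2)) ((1 + w) * (1 - (a + D)^2)) := by
  have hA1 := lemA hm0 ht0 hg0 hβ0 hβ1 hsum1 hK1 hKt
  have hsx : |a| ≤ Real.sqrt (m * (1 - β)) := by
    rw [← Real.sqrt_sq_eq_abs]
    exact Real.sqrt_le_sqrt ha2
  have hsD : |D| ≤ Real.sqrt (t * β) := by
    rw [← Real.sqrt_sq_eq_abs]
    exact Real.sqrt_le_sqrt hD2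
  have hcabs : |a + D| ≤ Real.sqrt (m * (1 - β)) + Real.sqrt (t * β) :=
    le_trans (abs_add_le a D) (add_le_add hsx hsD)
  have hcC : (a + D)^2 ≤ (Real.sqrt (m * (1 - β)) + Real.sqrt (t * β))^2 := by
    calc (a + D)^2 = |a + D|^2 := (sq_abs _).symm
      _ ≤ (Real.sqrt (m * (1 - β)) + Real.sqrt (t * β))^2 := by
          nlinarith [abs_nonneg (a + D)]
  have hKtβ : K * (t * β) ≤ 1 - (a + D)^2 := by linarith
  have hLHS : |(|a| - |a + D|)| ≤ Real.sqrt (t * β) := by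
    calc |(|a| - |a + D|)| ≤ |a - (a + D)| := abs_abs_sub_abs_le_abs_sub _ _
      _ = |D| := by rw [show a - (a + D) = -D by ring, abs_neg]
      _ ≤ Real.sqrt (t * β) := hsD
  -- branch 1
  have htβc : t * β ≤ w^2 * (1 - (a + D)^2) := by
    have h1 : t * β = w^2 * (K * (t * β)) := by
      rw [← mul_assoc, hwK, one_mul]
    rw [h1]
    exact mul_le_mul_of_nonneg_left hKtβ (sq_nonneg w)
  have hbranch1 : Real.sqrt (t * β) ≤ w * Real.sqrt (1 - (a + D)^2) := by
    calc Real.sqrt (t * β) ≤ Real.sqrt (w^2 * (1 - (a + D)^2)) := Real.sqrt_le_sqrt htβc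
      _ = w * Real.sqrt (1 - (a + D)^2) := by
          rw [Real.sqrt_mul (sq_nonneg w), Real.sqrt_sq hw.le]
  -- branch 2
  have hsum2 : m + t + t / w^2 ≤ 1 := by
    have hw2pos : (0:ℝ) < w^2 := by positivity
    have h1 : t / w^2 = K * t := by
      rw [eq_comm, eq_div_iff (ne_of_gt hw2pos)]
      nlinarith
    rw [h1]
    linarith
  have hB := lemB hm0 ht0 hβ0 hβ1 hw hw1 hsum2
  have hbranch2 : Real.sqrt (t * β) ≤ w * ((1 + w) * (1 - (a + D)^2)) := by
    calc Real.sqrt (t * β) ≤ w * (1 + w) *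
          (1 - (Real.sqrt (m * (1 - β)) + Real.sqrt (t * β))^2) := hB
      _ ≤ w * (1 + w) * (1 - (a + D)^2) := by
          apply mul_le_mul_of_nonneg_left (by linarith) (by positivity)
      _ = w * ((1 + w) * (1 - (a + D)^2)) := by ring
  rcases le_total (Real.sqrt (1 - (a + D)^2)) ((1 + w) * (1 - (a + D)^2)) with hmin | hmin
  · rw [min_eq_left hmin]
    exact le_trans hLHS hbranch1
  · rw [min_eq_right hmin]
    exact le_trans hLHS hbranch2

set_option maxHeartbeats 1000000 in
/-- Truncation preserves correlation (two-sided version). Let `u, v ∈ ℝ^d` be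
unit vectors with `v` having at most `s` nonzero entries, and let `s ≤ r ≤ d`.
If `F` is any set of `r` coordinates of largest magnitude of `u` (so `top_r u`
keeps exactly the coordinates in `F`), then
`||⟨top_r u, v⟩| − |⟨u,v⟩|| ≤ √(s/r)·min{√(1−⟨u,v⟩²), (1+√(s/r))(1−⟨u,v⟩²)}`. -/
theorem truncation_preserves_correlation {d s r : ℕ}
    (hr1 : 1 ≤ r) (hrd : r ≤ d) (hsr : s ≤ r)
    (u v : Fin d → ℝ)
    (hu : ∑ i, u i ^ 2 = 1) (hv : ∑ i, v i ^ 2 = 1)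
    (hvs : {i : Fin d | v i ≠ 0}.ncard ≤ s)
    (F : Finset (Fin d)) (hF : F.card = r)
    (hFtop : ∀ i ∈ F, ∀ j ∉ F, |u j| ≤ |u i|) :
    |(|∑ i ∈ F, u i * v i| - |∑ i, u i * v i|)| ≤
      Real.sqrt ((s : ℝ) / r) *
        min (Real.sqrt (1 - (∑ i, u i * v i) ^ 2))
          ((1 + Real.sqrt ((s : ℝ) / r)) * (1 - (∑ i, u i * v i) ^ 2)) := by
  classical
  -- s ≥ 1
  have hs1 : 1 ≤ s := by
    by_contra h
    push_neg at h
    have hs0 : s = 0 := by omega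
    rw [hs0, Nat.le_zero, Set.ncard_eq_zero (Set.toFinite _)] at hvs
    have hvz : ∀ i, v i = 0 := by
      intro i
      by_contra hvi
      have hmem : i ∈ {i : Fin d | v i ≠ 0} := hvi
      rw [hvs] at hmem
      exact hmem
    rw [Finset.sum_eq_zero (fun i _ => by rw [hvz i]; ring)] at hv
    norm_num at hv
  have hspos : (0:ℝ) < (s : ℝ) := by exact_mod_cast hs1
  have hrpos : (0:ℝ) < (r : ℝ) := by exact_mod_cast hr1
  have hsr' : (s : ℝ) ≤ (r : ℝ) := by exact_mod_cast hsr
  set S : Finset (Fin d) := univ.filter (fun i => v i ≠ 0) with hSdef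
  have hScard : S.card ≤ s := by
    have hcoe : {i : Fin d | v i ≠ 0} = ↑S := by
      ext i; simp [hSdef]
    rwa [hcoe, Set.ncard_coe_finset] at hvs
  have hvS : ∀ i, i ∉ S → v i = 0 := by
    intro i hi
    by_contra h
    exact hi (mem_filter.mpr ⟨mem_univ _, h⟩)
  set T : Finset (Fin d) := S \ F with hTdef
  set m := ∑ i ∈ S ∩ F, u i ^ 2 with hmdef
  set t := ∑ i ∈ T, u i ^ 2 with htdef
  set β := ∑ i ∈ T, v i ^ 2 with hβdef
  set a := ∑ i ∈ S ∩ F, u i * v i with hadef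
  set D := ∑ i ∈ T, u i * v i with hDdef
  have hm0 : 0 ≤ m := Finset.sum_nonneg (fun i _ => sq_nonneg _)
  have ht0 : 0 ≤ t := Finset.sum_nonneg (fun i _ => sq_nonneg _)
  have hβ0 : 0 ≤ β := Finset.sum_nonneg (fun i _ => sq_nonneg _)
  -- sum of v² over S is 1
  have hsumv : ∑ i ∈ S, v i ^ 2 = 1 := by
    rw [← hv]
    apply Finset.sum_subset (subset_univ S)
    intro i _ hi
    rw [hvS i hi]; ring
  have hb1β : (∑ i ∈ S ∩ F, v i ^ 2) + β = 1 := by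
    rw [hβdef, hTdef, Finset.sum_inter_add_sum_sdiff, hsumv]
  have hβ1 : β ≤ 1 := by
    have h0 : 0 ≤ ∑ i ∈ S ∩ F, v i ^ 2 := Finset.sum_nonneg (fun i _ => sq_nonneg _)
    linarith
  have h1β : 1 - β = ∑ i ∈ S ∩ F, v i ^ 2 := by linarith
  -- the truncated sum equals a
  have hA : ∑ i ∈ F, u i * v i = a := by
    rw [hadef, show S ∩ F = F ∩ S from Finset.inter_comm S F]
    symm
    apply Finset.sum_subset Finset.inter_subset_left
    intro i hiF hiFS
    have hns : i ∉ S := fun hiS => hiFS (Finset.mem_inter.mpr ⟨hiF, hiS⟩)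
    rw [hvS i hns]; ring
  -- full sum = a + D
  have hcsplit : ∑ i, u i * v i = a + D := by
    rw [hadef, hDdef, hTdef, Finset.sum_inter_add_sum_sdiff]
    symm
    apply Finset.sum_subset (subset_univ S)
    intro i _ hi
    rw [hvS i hi]; ring
  -- Cauchy-Schwarz on the two pieces
  have ha2 : a^2 ≤ m * (1 - β) := by
    rw [h1β, hadef, hmdef]
    exact Finset.sum_mul_sq_le_sq_mul_sq _ _ _
  have hD2 : D^2 ≤ t * β := by
    rw [hDdef, htdef, hβdef]
    exact Finset.sum_mul_sq_le_sq_mul_sq _ _ _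
  -- θ2 : minimal square on F
  have hFne : F.Nonempty := Finset.card_pos.mp (by rw [hF]; exact hr1)
  obtain ⟨i₀, hi₀F, hi₀⟩ := F.exists_mem_eq_inf' hFne (fun i => u i ^ 2)
  set θ2 := F.inf' hFne (fun i => u i ^ 2) with hθ2def
  have hθ2_0 : 0 ≤ θ2 := by rw [hi₀]; exact sq_nonneg _
  have hθ2_le : ∀ i ∈ F, θ2 ≤ u i ^ 2 := fun i hi => Finset.inf'_le _ hi
  have hout : ∀ j, j ∉ F → u j ^ 2 ≤ θ2 := by
    intro j hj
    rw [hi₀]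
    have h := hFtop i₀ hi₀F j hj
    calc u j ^ 2 = |u j| ^ 2 := (sq_abs _).symm
      _ ≤ |u i₀| ^ 2 := by nlinarith [abs_nonneg (u j)]
      _ = u i₀ ^ 2 := sq_abs _
  -- t ≤ |T| θ2
  have ht_card : t ≤ (T.card : ℝ) * θ2 := by
    rw [htdef]
    calc ∑ i ∈ T, u i ^ 2 ≤ ∑ _i ∈ T, θ2 :=
          Finset.sum_le_sum (fun i hi => hout i (Finset.mem_sdiff.mp hi).2)
      _ = (T.card : ℝ) * θ2 := by rw [Finset.sum_const, nsmul_eq_mul]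
  -- m + |F\S| θ2 + t ≤ 1
  set g := ((F \ S).card : ℝ) * θ2 with hgdef
  have hg0 : 0 ≤ g := mul_nonneg (Nat.cast_nonneg _) hθ2_0
  have hFS : m + g ≤ ∑ i ∈ F, u i ^ 2 := by
    have h1 : ∑ i ∈ F ∩ S, u i ^ 2 + ∑ i ∈ F \ S, u i ^ 2 = ∑ i ∈ F, u i ^ 2 :=
      Finset.sum_inter_add_sum_sdiff F S _
    have h2 : g ≤ ∑ i ∈ F \ S, u i ^ 2 := by
      rw [hgdef]
      have h3 := Finset.card_nsmul_le_sum (F \ S) (fun i => u i ^ 2) θ2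
        (fun i hi => hθ2_le i (Finset.mem_sdiff.mp hi).1)
      rwa [nsmul_eq_mul] at h3
    have h3 : m = ∑ i ∈ F ∩ S, u i ^ 2 := by
      rw [hmdef, Finset.inter_comm]
    linarith
  have hFT : ∑ i ∈ F, u i ^ 2 + t ≤ 1 := by
    have hdisj : Disjoint F T := by
      rw [hTdef]
      exact Finset.disjoint_sdiff
    have h1 : ∑ i ∈ F ∪ T, u i ^ 2 ≤ 1 := by
      rw [← hu]
      exact Finset.sum_le_sum_of_subset_of_nonneg (subset_univ _) (fun i _ _ => sq_nonneg _)
    rw [Finset.sum_union hdisj] at h1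
    exact h1
  have hsum1 : m + g + t ≤ 1 := by linarith
  -- cardinality inequality
  have hcard1 : (T.card : ℝ) + ((S ∩ F).card : ℝ) ≤ (s : ℝ) := by
    have h1 : (S \ F).card + (S ∩ F).card = S.card := Finset.card_sdiff_add_card_inter S F
    have h2 : T.card + (S ∩ F).card ≤ s := by rw [hTdef]; omega
    exact_mod_cast h2
  have hcard2 : ((F \ S).card : ℝ) = (r : ℝ) - ((S ∩ F).card : ℝ) := by
    have h1 : (F \ S).card + (F ∩ S).card = F.card := Finset.card_sdiff_add_card_inter F S
    have h2 : (F ∩ S).card = (S ∩ F).card := by rw [Finset.inter_comm]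
    have h3 : (F \ S).card + (S ∩ F).card = r := by omega
    have h4 := congrArg (fun n : ℕ => (n : ℝ)) h3
    push_cast at h4
    linarith
  have hrt : (r : ℝ) * t ≤ (s : ℝ) * g := by
    have hn1 : (0:ℝ) ≤ ((S ∩ F).card : ℝ) := Nat.cast_nonneg _
    have hTle : (T.card : ℝ) ≤ (s : ℝ) - ((S ∩ F).card : ℝ) := by linarith
    have hstep : (r : ℝ) * (T.card : ℝ) ≤ (s : ℝ) * ((F \ S).card : ℝ) := by
      rw [hcard2]
      nlinarith [mul_le_mul_of_nonneg_left hTle hrpos.le,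
        mul_nonneg (sub_nonneg.mpr hsr') hn1]
    calc (r : ℝ) * t ≤ (r : ℝ) * ((T.card : ℝ) * θ2) :=
          mul_le_mul_of_nonneg_left ht_card (Nat.cast_nonneg _)
      _ = ((r : ℝ) * (T.card : ℝ)) * θ2 := by ring
      _ ≤ ((s : ℝ) * ((F \ S).card : ℝ)) * θ2 := mul_le_mul_of_nonneg_right hstep hθ2_0
      _ = (s : ℝ) * g := by rw [hgdef]; ring
  have hK1 : 1 ≤ (r : ℝ) / (s : ℝ) := by
    rw [le_div_iff₀ hspos, one_mul]
    exact hsr'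
  have hKt : (r : ℝ) / (s : ℝ) * t ≤ g := by
    rw [div_mul_eq_mul_div, div_le_iff₀ hspos]
    nlinarith
  -- w
  have hwpos : 0 < Real.sqrt ((s : ℝ)/(r : ℝ)) := Real.sqrt_pos.mpr (by positivity)
  have hw1 : Real.sqrt ((s : ℝ)/(r : ℝ)) ≤ 1 := by
    rw [show (1:ℝ) = Real.sqrt 1 from Real.sqrt_one.symm]
    apply Real.sqrt_le_sqrt
    rw [div_le_one hrpos]
    exact hsr'
  have hwK : (Real.sqrt ((s : ℝ)/(r : ℝ)))^2 * ((r : ℝ)/(s : ℝ)) = 1 := by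
    rw [Real.sq_sqrt (by positivity : (0:ℝ) ≤ (s : ℝ)/(r : ℝ))]
    field_simp
  clear_value m t β a D θ2 g
  rw [hA, hcsplit]
  exact assemble hm0 ht0 hg0 hβ0 hβ1 hsum1 hK1 hKt ha2 hD2 hwpos hw1 hwK
end

section
/- Let R ∈ ℝ^{d×k} have orthonormal columns whose supports collectively cover at most s coordinates, and let u ∈ ℝ^d be a unit vector. Then for every r ≥ s, ‖Rᵀ top_r(u)‖₂ ≥ ‖Rᵀ u‖₂ − √(s/r) · min{ √(1 − ‖Rᵀu‖₂²), (1 + √(s/r))·(1 − ‖Rᵀu‖₂²) }. -/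
open Matrix Finset

private lemma orth_entry {d k : ℕ} {R : Matrix (Fin d) (Fin k) ℝ} (hR : Rᵀ * R = 1)
    (j j' : Fin k) : ∑ i, R i j * R i j' = if j = j' then 1 else 0 := by
  have h := congrFun (congrFun hR j) j'
  simpa [Matrix.mul_apply, Matrix.one_apply, Matrix.transpose_apply] using h

private lemma swap_sum {d k : ℕ} (R : Matrix (Fin d) (Fin k) ℝ) (c : Fin k → ℝ) (x : Fin d → ℝ) :
    ∑ i, x i * (∑ j, c j * R i j) = ∑ j, c j * (∑ i, R i j * x i) := by
  simp only [Finset.mul_sum]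
  rw [Finset.sum_comm]
  exact Finset.sum_congr rfl fun j _ => Finset.sum_congr rfl fun i _ => by ring

private lemma swap_sum2 {d k : ℕ} {R : Matrix (Fin d) (Fin k) ℝ} (hR : Rᵀ * R = 1)
    (cx cy : Fin k → ℝ) :
    ∑ i, (∑ j, cx j * R i j) * (∑ j, cy j * R i j) = ∑ j, cx j * cy j := by
  have e1 : ∀ i, (∑ j, cx j * R i j) * (∑ j, cy j * R i j)
      = ∑ j, ∑ j', (cx j * cy j') * (R i j * R i j') := by
    intro i
    rw [Finset.sum_mul_sum]
    exact Finset.sum_congr rfl fun j _ => Finset.sum_congr rfl fun j' _ => by ring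
  simp only [e1]
  rw [Finset.sum_comm]
  refine Finset.sum_congr rfl fun j _ => ?_
  rw [Finset.sum_comm]
  have e2 : ∀ j' : Fin k, (∑ i, (cx j * cy j') * (R i j * R i j'))
      = (cx j * cy j') * ∑ i, R i j * R i j' := fun j' => (Finset.mul_sum _ _ _).symm
  simp only [e2, orth_entry hR, mul_ite, mul_one, mul_zero, Finset.sum_ite_eq,
    Finset.mem_univ, if_true]

private lemma resid_inner {d k : ℕ} {R : Matrix (Fin d) (Fin k) ℝ} (hR : Rᵀ * R = 1)
    (x y : Fin d → ℝ) :
    ∑ i, (x i - ∑ j, (∑ i', R i' j * x i') * R i j) *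
         (y i - ∑ j, (∑ i', R i' j * y i') * R i j)
      = (∑ i, x i * y i) - ∑ j, (∑ i, R i j * x i) * (∑ i, R i j * y i) := by
  have h1 := swap_sum R (fun j => ∑ i', R i' j * y i') x
  have h2 := swap_sum R (fun j => ∑ i', R i' j * x i') y
  have h3 := swap_sum2 hR (fun j => ∑ i', R i' j * x i') (fun j => ∑ i', R i' j * y i')
  have expand : ∀ i : Fin d,
      (x i - ∑ j, (∑ i', R i' j * x i') * R i j) * (y i - ∑ j, (∑ i', R i' j * y i') * R i j)
      = x i * y i - x i * (∑ j, (∑ i', R i' j * y i') * R i j)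
        - y i * (∑ j, (∑ i', R i' j * x i') * R i j)
        + (∑ j, (∑ i', R i' j * x i') * R i j) * (∑ j, (∑ i', R i' j * y i') * R i j) := by
    intro i; ring
  simp only [expand]
  rw [Finset.sum_add_distrib, Finset.sum_sub_distrib, Finset.sum_sub_distrib, h1, h2, h3]
  have c1 : ∑ j, (∑ i', R i' j * y i') * (∑ i, R i j * x i)
      = ∑ j, (∑ i, R i j * x i) * (∑ i, R i j * y i) :=
    Finset.sum_congr rfl fun j _ => by ring
  have c2 : ∑ j, (∑ i', R i' j * x i') * (∑ i, R i j * y i)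
      = ∑ j, (∑ i, R i j * x i) * (∑ i, R i j * y i) :=
    Finset.sum_congr rfl fun j _ => by ring
  rw [c1, c2]
  ring

private lemma bessel {d k : ℕ} {R : Matrix (Fin d) (Fin k) ℝ} (hR : Rᵀ * R = 1)
    (x : Fin d → ℝ) : ∑ j, (∑ i, R i j * x i) ^ 2 ≤ ∑ i, x i ^ 2 := by
  have h := resid_inner hR x x
  have h0 : (0:ℝ) ≤ ∑ i, (x i - ∑ j, (∑ i', R i' j * x i') * R i j) *
      (x i - ∑ j, (∑ i', R i' j * x i') * R i j) :=
    Finset.sum_nonneg fun i _ => mul_self_nonneg _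
  rw [h] at h0
  have e1 : ∑ i, x i * x i = ∑ i, x i ^2 := Finset.sum_congr rfl fun i _ => (sq (x i)).symm ▸ by ring
  have e2 : ∑ j, (∑ i, R i j * x i) * (∑ i, R i j * x i) = ∑ j, (∑ i, R i j * x i)^2 :=
    Finset.sum_congr rfl fun j _ => by ring
  rw [e1, e2] at h0
  linarith

private lemma resid_cs {d k : ℕ} {R : Matrix (Fin d) (Fin k) ℝ} (hR : Rᵀ * R = 1)
    (x y : Fin d → ℝ) :
    ((∑ i, x i * y i) - ∑ j, (∑ i, R i j * x i) * (∑ i, R i j * y i))^2 ≤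
      ((∑ i, x i ^ 2) - ∑ j, (∑ i, R i j * x i)^2) *
      ((∑ i, y i ^ 2) - ∑ j, (∑ i, R i j * y i)^2) := by
  have h := Finset.sum_mul_sq_le_sq_mul_sq Finset.univ
    (fun i => x i - ∑ j, (∑ i', R i' j * x i') * R i j)
    (fun i => y i - ∑ j, (∑ i', R i' j * y i') * R i j)
  have hxy := resid_inner hR x y
  have hxx := resid_inner hR x x
  have hyy := resid_inner hR y y
  have esq : ∀ z w : Fin d → ℝ, ∑ i, (z i - w i)^2 = ∑ i, (z i - w i) * (z i - w i) :=
    fun z w => Finset.sum_congr rfl fun i _ => by ring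
  rw [esq, esq, hxy, hxx, hyy] at h
  have e1 : ∑ i, x i * x i = ∑ i, x i ^2 := Finset.sum_congr rfl fun i _ => by ring
  have e1' : ∑ i, y i * y i = ∑ i, y i ^2 := Finset.sum_congr rfl fun i _ => by ring
  have e2 : ∑ j, (∑ i, R i j * x i) * (∑ i, R i j * x i) = ∑ j, (∑ i, R i j * x i)^2 :=
    Finset.sum_congr rfl fun j _ => by ring
  have e2' : ∑ j, (∑ i, R i j * y i) * (∑ i, R i j * y i) = ∑ j, (∑ i, R i j * y i)^2 :=
    Finset.sum_congr rfl fun j _ => by ring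
  rw [e1, e1', e2, e2'] at h
  exact h


private lemma le_of_sq_le' {x y : ℝ} (h : x^2 ≤ y^2) (hy : 0 ≤ y) : x ≤ y := by
  calc x ≤ |x| := le_abs_self x
    _ = Real.sqrt (x^2) := (Real.sqrt_sq_eq_abs x).symm
    _ ≤ Real.sqrt (y^2) := Real.sqrt_le_sqrt h
    _ = y := Real.sqrt_sq hy

private lemma aux_ip0 {A ip P2 : ℝ} (h : A = 0) (hcs1 : ip^2 ≤ A * P2) : ip = 0 := by
  rw [h, zero_mul] at hcs1
  nlinarith [sq_nonneg ip]

private lemma aux_L2nn {A ip L2 : ℝ} (h : 0 < A) (hcs3 : (A - ip)^2 ≤ A * L2) : 0 ≤ L2 := by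
  nlinarith [hcs3, sq_nonneg (A - ip)]

private lemma aux_m20 {q2 m2 A : ℝ} (h1A : 1 - A = 0) (hm2q : m2 ≤ q2 * (1 - A))
    (hm2 : 0 ≤ m2) : m2 = 0 := by
  rw [h1A, mul_zero] at hm2q
  linarith

private lemma aux_ipz {m2 ip A P2 : ℝ} (h1A : 1 - A = 0) (hm20 : m2 = 0)
    (hcs2 : (m2 - ip)^2 ≤ (1 - A) * (m2 - P2)) : ip = 0 := by
  rw [h1A, hm20, zero_mul] at hcs2
  have h0 : ip^2 ≤ 0 := by nlinarith [hcs2]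
  have h1 := le_antisymm h0 (sq_nonneg ip)
  exact pow_eq_zero_iff two_ne_zero |>.mp h1

private lemma aux_qe1 {q e : ℝ} (hepos : 0 < e) (hc : (1+q)*e^2 ≤ e) : (1+q)*e ≤ 1 := by
  nlinarith [hc, hepos]

private lemma aux_q2a {a e q A : ℝ} (ha0 : 0 ≤ a) (hq0 : 0 ≤ q) (he0 : 0 ≤ e)
    (ha2 : a^2 = A) (he2 : e^2 = 1 - A) (hqe1 : (1+q)*e ≤ 1) : q ≤ a * (1+q) := by
  have h1 : ((1+q)*e)^2 ≤ 1 := by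
    nlinarith [hqe1, mul_nonneg (by linarith : (0:ℝ) ≤ 1+q) he0]
  nlinarith [h1, ha2, he2, mul_nonneg ha0 (by linarith : (0:ℝ) ≤ 1+q),
    sq_nonneg (a*(1+q) - q), sq_nonneg (a*(1+q) + q)]

private lemma aux_q2ac {a q : ℝ} (hq0 : 0 ≤ q) (hq2a : q ≤ a * (1 + q)) :
    q^2 ≤ a * (q * (1 + q)) := by nlinarith [hq2a, hq0]

private lemma aux_m2ac {a e q m2 A q2 : ℝ} (hm2q : m2 ≤ q2 * (1 - A)) (hq2' : q^2 = q2)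
    (he2 : e^2 = 1 - A) (hq2ac : q^2 ≤ a * (q * (1 + q))) :
    m2 ≤ a * (q * (1 + q)) * e^2 := by
  nlinarith [hm2q, hq2', he2, hq2ac, sq_nonneg e,
    mul_nonneg (sub_nonneg.2 hq2ac) (sq_nonneg e)]

private lemma aux_b2 {a e q L A ip : ℝ} (ha2 : a^2 = A)
    (hipL : A - ip ≤ a * L) (hip_le : ip ≤ a * (q * (1 + q)) * e^2) :
    a * (a - q * ((1 + q) * e^2)) ≤ a * L := by nlinarith [hipL, ha2]

private lemma aux_ipub {A e m2 ip β P2 : ℝ} (he0 : 0 ≤ e) (hβ0 : 0 ≤ β)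
    (hcs2 : (m2 - ip)^2 ≤ (1 - A) * (m2 - P2)) (he2 : e^2 = 1 - A) (hβsq : β^2 = m2 - P2) :
    ip ≤ m2 + e * β := by
  nlinarith [hcs2, he2, hβsq, mul_nonneg he0 hβ0, sq_nonneg (m2 - ip + e * β)]

private lemma aux_sq_mono {e β K m2 : ℝ} (he0 : 0 ≤ e) (hβ0 : 0 ≤ β) (hth0 : 0 ≤ K - m2)
    (heβ : K - m2 < e * β) : (K - m2)^2 ≤ (e * β)^2 := by
  nlinarith [heβ, hth0, mul_nonneg he0 hβ0]

private lemma aux_D {a e q A : ℝ} (hq0 : 0 ≤ q) (ha1 : a ≤ 1) (ha2 : a^2 = A)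
    (he2 : e^2 = 1 - A) : (a * (1 + q) - q)^2 + (1 + q)^2 * e^2 ≥ 1 := by
  nlinarith [mul_nonneg (mul_nonneg hq0 (by linarith : (0:ℝ) ≤ 1 + q))
    (by linarith : (0:ℝ) ≤ 1 - a), he2, ha2]

private lemma aux_base {a e q : ℝ} (hq0 : 0 ≤ q) (ha1 : a ≤ 1)
    (hD : (a * (1 + q) - q)^2 + (1 + q)^2 * e^2 ≥ 1) :
    q^2 * e^4 ≤ (a * (q * (1 + q)) * e^2 - q^2 * e^2)^2 + ((q * (1 + q)) * e^2)^2 * e^2 := by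
  nlinarith [hD, mul_nonneg (mul_nonneg (sq_nonneg (q * e^2)) hq0)
    (mul_nonneg (by linarith : (0:ℝ) ≤ 1 + q) (by linarith : (0:ℝ) ≤ 1 - a))]

private lemma aux_xq {q q2 e m2 A : ℝ} (hm2q : m2 ≤ q2 * (1 - A)) (hq2' : q^2 = q2)
    (he2 : e^2 = 1 - A) : m2 ≤ q^2 * e^2 := by nlinarith [hm2q, hq2', he2]

private lemma aux_factor {a e q m2 : ℝ} (hxq : m2 ≤ q^2 * e^2)
    (hq2ac : q^2 ≤ a * (q * (1 + q))) (hm2 : 0 ≤ m2) :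
    (0:ℝ) ≤ e^2 + 2 * (a * (q * (1 + q)) * e^2) - m2 - q^2 * e^2 := by
  nlinarith [hxq, hq2ac, sq_nonneg e, hm2]

private lemma aux_key {a e q m2 : ℝ}
    (hbase : q^2 * e^4 ≤ (a * (q * (1 + q)) * e^2 - q^2 * e^2)^2 + ((q * (1 + q)) * e^2)^2 * e^2)
    (hxq : m2 ≤ q^2 * e^2)
    (hfactor : (0:ℝ) ≤ e^2 + 2 * (a * (q * (1 + q)) * e^2) - m2 - q^2 * e^2) :
    m2 * e^2 - (a * (q * (1 + q)) * e^2 - m2)^2 ≤ ((q * (1 + q)) * e^2)^2 * e^2 := by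
  nlinarith [hbase, mul_nonneg (sub_nonneg.2 hxq) hfactor]

private lemma aux_P2c {a e q m2 P2 β : ℝ} (hepos : 0 < e)
    (h1 : (a * (q * (1 + q)) * e^2 - m2)^2 ≤ (e * β)^2)
    (hβsq : β^2 = m2 - P2)
    (hkey : m2 * e^2 - (a * (q * (1 + q)) * e^2 - m2)^2 ≤ ((q * (1 + q)) * e^2)^2 * e^2) :
    P2 ≤ ((q * (1 + q)) * e^2)^2 := by
  have he2pos : (0:ℝ) < e^2 := by positivity
  nlinarith [h1, hβsq, hkey, he2pos]

private lemma aux_LaP {a P L A ip P2 L2 : ℝ} (ha2 : a^2 = A) (hPsq : P^2 = P2)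
    (hLsq : L^2 = L2) (hL2 : L2 = A - 2*ip + P2) (hipaP : ip ≤ a * P) (hL0 : 0 ≤ L) :
    a - P ≤ L := by
  refine le_of_sq_le' ?_ hL0
  have e1 : (a-P)^2 = a^2 - 2*(a*P) + P^2 := by ring
  rw [e1, hLsq, hL2, ha2, hPsq]
  linarith [hipaP]

private lemma scalar_key {A q2 m2 P2 ip L2 : ℝ}
    (hA0 : 0 ≤ A) (hA1 : A ≤ 1)
    (hq2 : 0 ≤ q2) (hq21 : q2 ≤ 1)
    (hm2 : 0 ≤ m2) (hm2q : m2 ≤ q2 * (1 - A))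
    (hP2 : 0 ≤ P2) (hP2m : P2 ≤ m2)
    (hcs1 : ip^2 ≤ A * P2)
    (hcs2 : (m2 - ip)^2 ≤ (1 - A) * (m2 - P2))
    (hcs3 : (A - ip)^2 ≤ A * L2)
    (hL2 : L2 = A - 2*ip + P2) :
    Real.sqrt L2 ≥ Real.sqrt A - Real.sqrt q2 *
      min (Real.sqrt (1 - A)) ((1 + Real.sqrt q2) * (1 - A)) := by
  set a := Real.sqrt A with hadef
  set e := Real.sqrt (1 - A) with hedef
  set q := Real.sqrt q2 with hqdef
  have ha0 : 0 ≤ a := Real.sqrt_nonneg _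
  have he0 : 0 ≤ e := Real.sqrt_nonneg _
  have hq0 : 0 ≤ q := Real.sqrt_nonneg _
  have ha2 : a^2 = A := Real.sq_sqrt hA0
  have he2 : e^2 = 1 - A := Real.sq_sqrt (by linarith)
  have hq2' : q^2 = q2 := Real.sq_sqrt hq2
  have hq1 : q ≤ 1 := Real.sqrt_le_one.mpr hq21
  have ha1 : a ≤ 1 := Real.sqrt_le_one.mpr hA1
  have hL2nonneg : 0 ≤ L2 := by
    rcases eq_or_lt_of_le hA0 with h | h
    · have hip0 : ip = 0 := aux_ip0 h.symm hcs1
      rw [hL2, hip0, ← h]; linarith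
    · exact aux_L2nn h hcs3
  set L := Real.sqrt L2 with hLdef
  have hL0 : 0 ≤ L := Real.sqrt_nonneg _
  have hLsq : L^2 = L2 := Real.sq_sqrt hL2nonneg
  set m := Real.sqrt m2 with hmdef
  set P := Real.sqrt P2 with hPdef
  have hm0 : 0 ≤ m := Real.sqrt_nonneg _
  have hP0 : 0 ≤ P := Real.sqrt_nonneg _
  have hmsq : m^2 = m2 := Real.sq_sqrt hm2
  have hPsq : P^2 = P2 := Real.sq_sqrt hP2
  have hPm : P ≤ m := Real.sqrt_le_sqrt hP2m
  have hmqe : m ≤ q * e := by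
    refine le_of_sq_le' ?_ (mul_nonneg hq0 he0)
    rw [hmsq, mul_pow, hq2', he2]; exact hm2q
  have hipaP : ip ≤ a * P := by
    refine le_of_sq_le' ?_ (mul_nonneg ha0 hP0)
    rw [mul_pow, ha2, hPsq]; exact hcs1
  have hipL : A - ip ≤ a * L := by
    refine le_of_sq_le' ?_ (mul_nonneg ha0 hL0)
    rw [mul_pow, ha2, hLsq]; exact hcs3
  have hLaP : a - P ≤ L := aux_LaP ha2 hPsq hLsq hL2 hipaP hL0
  rcases le_total e ((1 + q) * (1 - A)) with hc | hc
  · rw [min_eq_left hc]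
    have : a - q * e ≤ a - P := by linarith [hPm.trans hmqe]
    linarith
  · rw [min_eq_right hc]
    rw [show (1:ℝ) - A = e^2 from he2.symm] at hc ⊢
    rcases eq_or_lt_of_le ha0 with haz | hapos
    · have : 0 ≤ q * ((1 + q) * e^2) := by positivity
      linarith
    rcases eq_or_lt_of_le he0 with hez | hepos
    · have h1A : 1 - A = 0 := by rw [← he2, ← hez]; ring
      have hm20 : m2 = 0 := aux_m20 h1A hm2q hm2
      have hP20 : P2 = 0 := le_antisymm (by linarith) hP2
      have hip : ip = 0 := aux_ipz h1A hm20 hcs2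
      have hLA : L2 = A := by rw [hL2, hip, hP20]; ring
      have hLa : L = a := by rw [hLdef, hLA, hadef]
      rw [← hez, hLa]
      have : q * ((1+q) * (0:ℝ)^2) = 0 := by ring
      rw [this]; linarith
    have hqe1 : (1 + q) * e ≤ 1 := aux_qe1 hepos hc
    have hq2a : q ≤ a * (1 + q) := aux_q2a ha0 hq0 he0 ha2 he2 hqe1
    have hq2ac : q^2 ≤ a * (q * (1 + q)) := aux_q2ac hq0 hq2a
    have hm2ac : m2 ≤ a * (q * (1 + q)) * e^2 := aux_m2ac hm2q hq2' he2 hq2ac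
    by_cases hip_le : ip ≤ a * (q * (1 + q)) * e^2
    · have h1 : a * (a - q * ((1 + q) * e^2)) ≤ a * L := aux_b2 ha2 hipL hip_le
      have h2 := (mul_le_mul_iff_right₀ hapos).1 h1
      linarith
    · push_neg at hip_le
      have hβsq0 : (0:ℝ) ≤ m2 - P2 := by linarith
      set β := Real.sqrt (m2 - P2) with hβdef
      have hβ0 : 0 ≤ β := Real.sqrt_nonneg _
      have hβsq : β^2 = m2 - P2 := Real.sq_sqrt hβsq0
      have hipub : ip ≤ m2 + e * β := aux_ipub he0 hβ0 hcs2 he2 hβsq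
      have hth0 : (0:ℝ) ≤ a * (q * (1 + q)) * e^2 - m2 := by linarith [hm2ac]
      have heβ : a * (q * (1 + q)) * e^2 - m2 < e * β := by linarith
      have h1 : (a * (q * (1 + q)) * e^2 - m2)^2 ≤ (e * β)^2 := aux_sq_mono he0 hβ0 hth0 heβ
      have hD := aux_D hq0 ha1 ha2 he2
      have hbase := aux_base hq0 ha1 hD
      have hxq : m2 ≤ q^2 * e^2 := aux_xq hm2q hq2' he2
      have hfactor := aux_factor hxq hq2ac hm2
      have hkey := aux_key hbase hxq hfactor
      have hP2c : P2 ≤ ((q * (1 + q)) * e^2)^2 := aux_P2c hepos h1 hβsq hkey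
      have hPc : P ≤ (q * (1 + q)) * e^2 := by
        refine le_of_sq_le' ?_ (by positivity)
        rw [hPsq]; exact hP2c
      have hfin : a - q * ((1 + q) * e^2) ≤ L := by
        have h3 : q * ((1 + q) * e^2) = (q * (1 + q)) * e^2 := by ring
        rw [h3]; linarith [hLaP, hPc]
      linarith


set_option maxHeartbeats 1000000 in
/-- Truncation preserves subspace correlation. Let `R ∈ ℝ^{d×k}` have
orthonormal columns jointly supported on at most `s` coordinates, let `u` be a
unit vector and `s ≤ r ≤ d`. If `F` is any set of `r` coordinates of largest
magnitude of `u` (so `top_r u` keeps exactly the coordinates in `F`), then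
`‖Rᵀ top_r u‖ ≥ ‖Rᵀ u‖ − √(s/r)·min{√(1−‖Rᵀu‖²), (1+√(s/r))(1−‖Rᵀu‖²)}`. -/
theorem truncation_preserves_subspace_correlation {d k s r : ℕ}
    (R : Matrix (Fin d) (Fin k) ℝ)
    (hR : Rᵀ * R = 1)
    (hsupp : {i : Fin d | ∃ j, R i j ≠ 0}.ncard ≤ s)
    (u : Fin d → ℝ) (hu : ∑ i, u i ^ 2 = 1)
    (hsr : s ≤ r) (hrd : r ≤ d)
    (F : Finset (Fin d)) (hF : F.card = r)
    (hFtop : ∀ i ∈ F, ∀ j ∉ F, |u j| ≤ |u i|) :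
    Real.sqrt (∑ j, (∑ i ∈ F, R i j * u i) ^ 2) ≥
      Real.sqrt (∑ j, (∑ i, R i j * u i) ^ 2) -
        Real.sqrt ((s : ℝ) / r) *
          min (Real.sqrt (1 - ∑ j, (∑ i, R i j * u i) ^ 2))
            ((1 + Real.sqrt ((s : ℝ) / r)) * (1 - ∑ j, (∑ i, R i j * u i) ^ 2)) := by
  classical
  set S : Finset (Fin d) := {i : Fin d | ∃ j, R i j ≠ 0}.toFinset with hSdef
  have hmemS : ∀ i : Fin d, i ∈ S ↔ ∃ j, R i j ≠ 0 := fun i => by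
    rw [hSdef]; exact Set.mem_toFinset
  have hScard : S.card ≤ s := by rwa [Set.ncard_eq_toFinset_card'] at hsupp
  have hRz : ∀ i, i ∉ S → ∀ j, R i j = 0 := by
    intro i hi j
    by_contra h
    exact hi ((hmemS i).2 ⟨j, h⟩)
  set T : Finset (Fin d) := S \ F with hTdef
  have hTF : ∀ i ∈ T, i ∉ F := fun i hi => (Finset.mem_sdiff.1 hi).2
  -- F-sum = full sum minus T-sum
  have hwp : ∀ j, ∑ i ∈ F, R i j * u i = (∑ i, R i j * u i) - ∑ i ∈ T, R i j * u i := by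
    intro j
    have h1 : ∑ i ∈ F, R i j * u i = ∑ i ∈ Finset.univ \ T, R i j * u i := by
      apply Finset.sum_subset
      · intro i hiF
        simp only [Finset.mem_sdiff, Finset.mem_univ, true_and]
        intro hiT; exact hTF i hiT hiF
      · intro i hi hiF
        have hiT : i ∉ T := (Finset.mem_sdiff.1 hi).2
        have hiS : i ∉ S := fun hiS => hiT (Finset.mem_sdiff.2 ⟨hiS, hiF⟩)
        simp [hRz i hiS j]
    rw [h1, Finset.sum_sdiff_eq_sub (Finset.subset_univ T)]
  -- quantities
  set A := ∑ j, (∑ i, R i j * u i)^2 with hAdef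
  set ip := ∑ j, (∑ i, R i j * u i) * (∑ i ∈ T, R i j * u i) with hipdef
  set m2 := ∑ i ∈ T, u i^2 with hm2def
  set P2 := ∑ j, (∑ i ∈ T, R i j * u i)^2 with hP2def
  set L2 := ∑ j, (∑ i ∈ F, R i j * u i)^2 with hL2def
  -- the T-restricted vector
  set v : Fin d → ℝ := fun i => if i ∈ T then u i else 0 with hvdef
  have hv1 : ∀ j, ∑ i, R i j * v i = ∑ i ∈ T, R i j * u i := by
    intro j
    rw [hvdef]
    simp [mul_ite, mul_zero, Finset.sum_ite_mem]
  have hv2 : ∑ i, v i ^ 2 = m2 := by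
    rw [hvdef, hm2def]
    simp [apply_ite (· ^ 2), Finset.sum_ite_mem]
  have hv3 : ∑ i, u i * v i = m2 := by
    rw [hvdef, hm2def]
    simp [mul_ite, mul_zero, Finset.sum_ite_mem, sq]
  -- basic facts
  have hA0 : 0 ≤ A := Finset.sum_nonneg fun j _ => sq_nonneg _
  have hA1 : A ≤ 1 := by rw [hAdef]; exact (bessel hR u).trans hu.le
  have hm2 : 0 ≤ m2 := Finset.sum_nonneg fun i _ => sq_nonneg _
  have hP2 : 0 ≤ P2 := Finset.sum_nonneg fun j _ => sq_nonneg _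
  have hP2m : P2 ≤ m2 := by
    have hb := bessel hR v
    rw [hv2] at hb
    calc P2 = ∑ j, (∑ i, R i j * v i)^2 := Finset.sum_congr rfl fun j _ => by rw [hv1 j]
      _ ≤ m2 := hb
  have hcs1 : ip^2 ≤ A * P2 := by
    rw [hipdef, hAdef, hP2def]
    exact Finset.sum_mul_sq_le_sq_mul_sq Finset.univ _ _
  have hcs2 : (m2 - ip)^2 ≤ (1 - A) * (m2 - P2) := by
    have h := resid_cs hR u v
    have e1 : ∑ j, (∑ i, R i j * u i) * (∑ i, R i j * v i) = ip :=
      Finset.sum_congr rfl fun j _ => by rw [hv1 j]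
    have e2 : ∑ j, (∑ i, R i j * v i)^2 = P2 :=
      Finset.sum_congr rfl fun j _ => by rw [hv1 j]
    rw [hv3, hv2, hu, e1, e2] at h
    exact h
  have hcs3 : (A - ip)^2 ≤ A * L2 := by
    have h := Finset.sum_mul_sq_le_sq_mul_sq Finset.univ
      (fun j => ∑ i, R i j * u i) (fun j => (∑ i, R i j * u i) - ∑ i ∈ T, R i j * u i)
    have e1 : ∑ j, (∑ i, R i j * u i) * ((∑ i, R i j * u i) - ∑ i ∈ T, R i j * u i)
        = A - ip := by
      rw [hAdef, hipdef, ← Finset.sum_sub_distrib]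
      exact Finset.sum_congr rfl fun j _ => by ring
    have e2 : ∑ j, ((∑ i, R i j * u i) - ∑ i ∈ T, R i j * u i)^2 = L2 := by
      rw [hL2def]
      exact Finset.sum_congr rfl fun j _ => by rw [hwp j]
    rw [e1, e2] at h
    exact h
  have hL2eq : L2 = A - 2*ip + P2 := by
    rw [hL2def, hAdef, hipdef, hP2def]
    have e : ∀ j, (∑ i ∈ F, R i j * u i)^2
        = (∑ i, R i j * u i)^2 - 2*((∑ i, R i j * u i) * (∑ i ∈ T, R i j * u i))
          + (∑ i ∈ T, R i j * u i)^2 := fun j => by rw [hwp j]; ring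
    simp only [e]
    rw [Finset.sum_add_distrib, Finset.sum_sub_distrib, ← Finset.mul_sum]
  -- counting bound
  have hm2q : m2 ≤ ((s:ℝ)/r) * (1 - A) := by
    set G : Finset (Fin d) := F \ S with hGdef
    have hcard : G.card + S.card = T.card + F.card := by
      rw [hGdef, hTdef, Finset.card_sdiff_add_card, Finset.card_sdiff_add_card,
        Finset.union_comm]
    have hTs : T.card ≤ s := le_trans (Finset.card_le_card (by rw [hTdef]; exact Finset.sdiff_subset)) hScard
    have hGlb : r + T.card ≤ G.card + s := by omega
    have hGub : ∑ i' ∈ G, u i'^2 ≤ 1 - A := by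
      have hAS : A ≤ ∑ i ∈ S, u i^2 := by
        have hb := bessel hR (fun i => if i ∈ S then u i else 0)
        have e1 : ∀ j, (∑ i, R i j * (if i ∈ S then u i else 0)) = ∑ i, R i j * u i := by
          intro j
          refine Finset.sum_congr rfl fun i _ => ?_
          by_cases hiS : i ∈ S
          · simp [hiS]
          · simp [hiS, hRz i hiS j]
        have e2 : ∑ i, (if i ∈ S then u i else 0)^2 = ∑ i ∈ S, u i^2 := by
          simp [apply_ite (· ^ 2), Finset.sum_ite_mem]
        calc A = ∑ j, (∑ i, R i j * (if i ∈ S then u i else 0))^2 := by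
              rw [hAdef]; exact (Finset.sum_congr rfl fun j _ => by rw [e1 j]).symm
          _ ≤ ∑ i, (if i ∈ S then u i else 0)^2 := hb
          _ = ∑ i ∈ S, u i^2 := e2
      have hdisj : Disjoint S G := by rw [hGdef]; exact Finset.disjoint_sdiff
      have hun : ∑ i ∈ S, u i^2 + ∑ i' ∈ G, u i'^2 = ∑ i ∈ S ∪ G, u i^2 :=
        (Finset.sum_union hdisj).symm
      have hle1 : ∑ i ∈ S ∪ G, u i^2 ≤ ∑ i, u i^2 :=
        Finset.sum_le_sum_of_subset_of_nonneg (Finset.subset_univ _) fun i _ _ => sq_nonneg _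
      rw [hu] at hle1
      linarith
    have hpt : ∀ i ∈ T, ∀ i' ∈ G, u i^2 ≤ u i'^2 := by
      intro i hi i' hi'
      have h1 := hFtop i' (Finset.mem_sdiff.1 hi').1 i (hTF i hi)
      calc u i^2 = |u i|^2 := (sq_abs _).symm
        _ ≤ |u i'|^2 := by exact pow_le_pow_left₀ (abs_nonneg _) h1 2
        _ = u i'^2 := sq_abs _
    have hsum1 : (G.card : ℝ) * m2 ≤ (T.card : ℝ) * ∑ i' ∈ G, u i'^2 := by
      have h1 : ∑ i ∈ T, ∑ _i' ∈ G, u i^2 ≤ ∑ _i ∈ T, ∑ i' ∈ G, u i'^2 :=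
        Finset.sum_le_sum fun i hi => Finset.sum_le_sum fun i' hi' => hpt i hi i' hi'
      have h2 : ∑ i ∈ T, ∑ _i' ∈ G, u i^2 = (G.card : ℝ) * m2 := by
        rw [hm2def, Finset.mul_sum]
        exact Finset.sum_congr rfl fun i _ => by rw [Finset.sum_const, nsmul_eq_mul]
      have h3 : ∑ _i ∈ T, ∑ i' ∈ G, u i'^2 = (T.card : ℝ) * ∑ i' ∈ G, u i'^2 := by
        rw [Finset.sum_const, nsmul_eq_mul]
      rw [h2, h3] at h1
      exact h1
    by_cases ht0 : T = ∅
    · have : m2 = 0 := by rw [hm2def, ht0]; simp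
      rw [this]
      have : (0:ℝ) ≤ ((s:ℝ)/r) * (1 - A) := mul_nonneg (by positivity) (by linarith)
      linarith
    · have htpos : 1 ≤ T.card := Finset.card_pos.2 (Finset.nonempty_iff_ne_empty.2 ht0)
      have hg1 : 1 ≤ G.card := by omega
      have hr1 : 1 ≤ r := by omega
      have hgpos : (0:ℝ) < (G.card : ℝ) := by exact_mod_cast hg1
      have hrpos : (0:ℝ) < (r : ℝ) := by exact_mod_cast hr1
      have hrt_sg : (r : ℝ) * (T.card : ℝ) ≤ (s : ℝ) * (G.card : ℝ) := by
        have c1 : (r:ℝ) + (T.card : ℝ) ≤ (G.card : ℝ) + (s:ℝ) := by exact_mod_cast hGlb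
        have c2 : (T.card : ℝ) ≤ (s:ℝ) := by exact_mod_cast hTs
        have c3 : (s:ℝ) ≤ (r:ℝ) := by exact_mod_cast hsr
        nlinarith [mul_nonneg (sub_nonneg.2 c2) (sub_nonneg.2 c3),
          mul_nonneg (Nat.cast_nonneg s) (by linarith : (0:ℝ) ≤ (G.card:ℝ) + s - r - T.card)]
      have hGnn : (0:ℝ) ≤ ∑ i' ∈ G, u i'^2 := Finset.sum_nonneg fun i _ => sq_nonneg _
      rw [div_mul_eq_mul_div, le_div_iff₀ hrpos]
      -- goal : m2 * r ≤ s * (1 - A)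
      have key : (G.card:ℝ) * (m2 * r) ≤ (G.card:ℝ) * ((s:ℝ) * (1 - A)) := by
        have step1 : (G.card:ℝ) * m2 * r ≤ (T.card:ℝ) * (∑ i' ∈ G, u i'^2) * r :=
          mul_le_mul_of_nonneg_right hsum1 hrpos.le
        have step2 : (T.card:ℝ) * (∑ i' ∈ G, u i'^2) * r ≤ (T.card:ℝ) * (1 - A) * r := by
          have := mul_le_mul_of_nonneg_left hGub (Nat.cast_nonneg T.card)
          exact mul_le_mul_of_nonneg_right this hrpos.le
        have step3 : (T.card:ℝ) * (1 - A) * r ≤ (s:ℝ) * (G.card:ℝ) * (1 - A) := by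
          have h1A : (0:ℝ) ≤ 1 - A := by linarith
          nlinarith [mul_le_mul_of_nonneg_right hrt_sg h1A]
        nlinarith [step1, step2, step3]
      have := (mul_le_mul_iff_right₀ hgpos).1 key
      linarith
  -- q2 bounds
  have hq2 : (0:ℝ) ≤ (s:ℝ)/r := by positivity
  have hq21 : (s:ℝ)/r ≤ 1 := by
    rcases Nat.eq_zero_or_pos r with h | h
    · subst h
      have : s = 0 := Nat.le_zero.1 hsr
      simp [this]
    · rw [div_le_one (by exact_mod_cast h)]
      exact_mod_cast hsr
  exact scalar_key hA0 hA1 hq2 hq21 hm2 hm2q hP2 hP2m hcs1 hcs2 hcs3 hL2eq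
end

section
/- Suppose u ∈ ℝ^d is an r-sparse unit vector with r ≥ s, V ∈ ℝ^{d×k} has orthonormal columns, ‖Vᵀu‖₂² ≥ 1 − Δ for some Δ ∈ (0, 1/2), and the columns of V are jointly supported on at most s coordinates. Then the normalized s-truncation w = top_s(u)/‖top_s(u)‖₂ satisfies ‖Vᵀw‖₂² ≥ 1 − 5Δ. -/
/-!
Let `S` be the joint support of the columns of `V`, so `Vᵀu` only sees `u_S`. Since `|S| ≤ |F|`
and `F` collects the largest entries of `u`, the mass of `u` on `S ∖ F` is at most its mass on
`F ∖ S`. Truncating to `F` turns `u_S` into `u_{S∩F} = u_S - u_{S∖F}`. The defect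
`‖x‖² - ‖Vᵀx‖² = ‖x - VVᵀx‖²` is the square of a seminorm, so it grows by a controlled amount:
`‖y‖² - ‖Vᵀy‖² ≤ 3 (‖x‖² - ‖Vᵀx‖²) + (3/2) ‖z‖²` when `x = y + z`. Finally
`‖u_S‖² - ‖Vᵀu‖² ≤ Δ - ‖u - u_S‖²`, and `1 - 5Δ` comes out of elementary arithmetic using `Δ < 1/2`.
-/

open Matrix Finset

theorem sub_dotProduct_sub_le {m : Type*} [Fintype m] {ε : ℝ} (hε : 0 < ε) (a b : m → ℝ) :
    (a - b) ⬝ᵥ (a - b) ≤ (1 + ε) * a ⬝ᵥ a + (1 + ε⁻¹) * b ⬝ᵥ b := by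
  simp only [dotProduct, mul_sum, ← sum_add_distrib]
  refine sum_le_sum fun i _ => ?_
  have hsq : (1 + ε) * (a i * a i) + (1 + ε⁻¹) * (b i * b i) - (a - b) i * (a - b) i
      = ε⁻¹ * (ε * a i + b i) ^ 2 := by
    simp only [Pi.sub_apply]
    field_simp
    ring
  have : 0 ≤ ε⁻¹ * (ε * a i + b i) ^ 2 := by positivity
  linarith

section OrthonormalColumns

variable {m n : Type*} [Fintype m] [Fintype n] [DecidableEq n] {V : Matrix m n ℝ}

theorem mulVec_dotProduct_mulVec_self (hV : Vᵀ * V = 1) (w : n → ℝ) :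
    (V *ᵥ w) ⬝ᵥ (V *ᵥ w) = w ⬝ᵥ w := by
  rw [dotProduct_comm, dotProduct_mulVec, ← mulVec_transpose, mulVec_mulVec, hV, one_mulVec]

theorem dotProduct_self_sub_projection (hV : Vᵀ * V = 1) (x : m → ℝ) :
    (x - V *ᵥ (Vᵀ *ᵥ x)) ⬝ᵥ (x - V *ᵥ (Vᵀ *ᵥ x)) = x ⬝ᵥ x - (Vᵀ *ᵥ x) ⬝ᵥ (Vᵀ *ᵥ x) := by
  have hcross : x ⬝ᵥ V *ᵥ (Vᵀ *ᵥ x) = (Vᵀ *ᵥ x) ⬝ᵥ (Vᵀ *ᵥ x) := by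
    rw [dotProduct_mulVec, ← mulVec_transpose]
  simp only [sub_dotProduct, dotProduct_sub, mulVec_dotProduct_mulVec_self hV, hcross,
    dotProduct_comm (V *ᵥ _) x]
  ring

theorem transpose_mulVec_dotProduct_self_le (hV : Vᵀ * V = 1) (x : m → ℝ) :
    (Vᵀ *ᵥ x) ⬝ᵥ (Vᵀ *ᵥ x) ≤ x ⬝ᵥ x := by
  have := dotProduct_self_sub_projection hV x ▸ dotProduct_self_star_nonneg (x - V *ᵥ (Vᵀ *ᵥ x))
  linarith

theorem dotProduct_self_sub_transpose_mulVec_le (hV : Vᵀ * V = 1) {x y z : m → ℝ}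
    (hx : x = y + z) {ε : ℝ} (hε : 0 < ε) :
    y ⬝ᵥ y - (Vᵀ *ᵥ y) ⬝ᵥ (Vᵀ *ᵥ y)
      ≤ (1 + ε) * (x ⬝ᵥ x - (Vᵀ *ᵥ x) ⬝ᵥ (Vᵀ *ᵥ x)) + (1 + ε⁻¹) * z ⬝ᵥ z := by
  set R : (m → ℝ) → m → ℝ := fun w => w - V *ᵥ (Vᵀ *ᵥ w) with hR
  have hRy : R y = R x - R z := by
    simp only [hR, hx, mulVec_add]
    abel
  calc y ⬝ᵥ y - (Vᵀ *ᵥ y) ⬝ᵥ (Vᵀ *ᵥ y) = R y ⬝ᵥ R y :=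
        (dotProduct_self_sub_projection hV y).symm
    _ ≤ (1 + ε) * R x ⬝ᵥ R x + (1 + ε⁻¹) * R z ⬝ᵥ R z := hRy ▸ sub_dotProduct_sub_le hε _ _
    _ ≤ (1 + ε) * (x ⬝ᵥ x - (Vᵀ *ᵥ x) ⬝ᵥ (Vᵀ *ᵥ x)) + (1 + ε⁻¹) * z ⬝ᵥ z := by
      rw [dotProduct_self_sub_projection hV x, dotProduct_self_sub_projection hV z]
      gcongr
      exact sub_le_self _ (dotProduct_self_star_nonneg _)

end OrthonormalColumns

section Support

variable {m n : Type*} [Fintype m] {V : Matrix m n ℝ}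

theorem indicator_dotProduct_self (A : Finset m) (u : m → ℝ) :
    (A : Set m).indicator u ⬝ᵥ (A : Set m).indicator u = ∑ i ∈ A, u i ^ 2 := by
  classical
  simp [dotProduct, Set.indicator_apply, sum_ite_mem, sq]

theorem transpose_mulVec_indicator_dotProduct_self [Fintype n] (A : Finset m) (u : m → ℝ) :
    (Vᵀ *ᵥ (A : Set m).indicator u) ⬝ᵥ (Vᵀ *ᵥ (A : Set m).indicator u)
      = ∑ j, (∑ i ∈ A, V i j * u i) ^ 2 := by
  classical
  simp [dotProduct, mulVec, Set.indicator_apply, sum_ite_mem, sq]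

theorem transpose_mulVec_indicator_of_support {S : Set m} (hVS : ∀ i ∉ S, ∀ j, V i j = 0)
    (x : m → ℝ) : Vᵀ *ᵥ S.indicator x = Vᵀ *ᵥ x := by
  classical
  ext j
  simp only [mulVec, dotProduct, transpose_apply]
  refine sum_congr rfl fun i _ => ?_
  by_cases hi : i ∈ S <;> simp [hi, hVS]

variable [DecidableEq m] {S : Finset m}

theorem transpose_mulVec_indicator_inter (hVS : ∀ i ∉ S, ∀ j, V i j = 0) (A : Finset m)
    (u : m → ℝ) :
    Vᵀ *ᵥ ((S ∩ A : Finset m) : Set m).indicator u = Vᵀ *ᵥ (A : Set m).indicator u := by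
  rw [coe_inter, ← Set.indicator_indicator, transpose_mulVec_indicator_of_support hVS]

variable [Fintype n] [DecidableEq n]

theorem sum_sq_transpose_mulVec_le_of_support (hV : Vᵀ * V = 1)
    (hVS : ∀ i ∉ S, ∀ j, V i j = 0) (u : m → ℝ) :
    ∑ j, (∑ i, V i j * u i) ^ 2 ≤ ∑ i ∈ S, u i ^ 2 := by
  have := transpose_mulVec_dotProduct_self_le hV ((S : Set m).indicator u)
  rwa [← inter_univ S, transpose_mulVec_indicator_inter hVS,
    transpose_mulVec_indicator_dotProduct_self, indicator_dotProduct_self, inter_univ] at this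

theorem sum_sq_inter_sub_le (hV : Vᵀ * V = 1) (hVS : ∀ i ∉ S, ∀ j, V i j = 0) (u : m → ℝ)
    (F : Finset m) {ε : ℝ} (hε : 0 < ε) :
    ∑ i ∈ S ∩ F, u i ^ 2 - ∑ j, (∑ i ∈ F, V i j * u i) ^ 2
      ≤ (1 + ε) * (∑ i ∈ S, u i ^ 2 - ∑ j, (∑ i, V i j * u i) ^ 2)
        + (1 + ε⁻¹) * ∑ i ∈ S \ F, u i ^ 2 := by
  have hsplit : (S : Set m).indicator u
      = ((S ∩ F : Finset m) : Set m).indicator u + ((S \ F : Finset m) : Set m).indicator u := by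
    ext i
    by_cases hS : i ∈ S <;> by_cases hF : i ∈ F <;> simp [hS, hF]
  have := dotProduct_self_sub_transpose_mulVec_le hV hsplit hε
  rwa [transpose_mulVec_indicator_inter hVS, ← inter_univ S, transpose_mulVec_indicator_inter hVS,
    transpose_mulVec_indicator_dotProduct_self, transpose_mulVec_indicator_dotProduct_self,
    indicator_dotProduct_self, indicator_dotProduct_self, indicator_dotProduct_self, inter_univ]
    at this

end Support

theorem sum_sdiff_le_sum_sdiff_of_card_le {ι : Type*} [DecidableEq ι] {g : ι → ℝ}
    (hg : ∀ i, 0 ≤ g i) {S F : Finset ι} (hcard : S.card ≤ F.card)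
    (htop : ∀ i ∈ F, ∀ j ∉ F, g j ≤ g i) :
    ∑ j ∈ S \ F, g j ≤ ∑ i ∈ F \ S, g i := by
  rcases (S \ F).eq_empty_or_nonempty with hempty | hne
  · simpa [hempty] using sum_nonneg fun i _ => hg i
  obtain ⟨j₀, hj₀, hmax⟩ := exists_max_image (S \ F) g hne
  have hsdiff : (S \ F).card ≤ (F \ S).card := card_sdiff_le_card_sdiff_iff.mpr hcard
  calc ∑ j ∈ S \ F, g j ≤ (S \ F).card • g j₀ := sum_le_card_nsmul _ _ _ hmax
    _ ≤ (F \ S).card • g j₀ := nsmul_le_nsmul_left (hg j₀) hsdiff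
    _ ≤ ∑ i ∈ F \ S, g i := card_nsmul_le_sum _ _ _ fun i hi =>
        htop i (mem_sdiff.mp hi).1 j₀ (mem_sdiff.mp hj₀).2

theorem one_sub_five_mul_le_truncation {m n : Type*} [Fintype m] [Fintype n] [DecidableEq m]
    [DecidableEq n] {V : Matrix m n ℝ} (hV : Vᵀ * V = 1) {S F : Finset m}
    (hVS : ∀ i ∉ S, ∀ j, V i j = 0) (hSF : S.card ≤ F.card) {u : m → ℝ}
    (hu : ∑ i, u i ^ 2 ≤ 1) (hFtop : ∀ i ∈ F, ∀ j ∉ F, |u j| ≤ |u i|) {Δ : ℝ} (hΔ : Δ < 1 / 2)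
    (hcorr : 1 - Δ ≤ ∑ j, (∑ i, V i j * u i) ^ 2) :
    1 - 5 * Δ ≤ (∑ j, (∑ i ∈ F, V i j * u i) ^ 2) / ∑ i ∈ F, u i ^ 2 := by
  set α := ∑ i ∈ S ∩ F, u i ^ 2
  set β := ∑ i ∈ F \ S, u i ^ 2
  set γ := ∑ i ∈ S \ F, u i ^ 2
  have hF : ∑ i ∈ F, u i ^ 2 = α + β := by
    rw [← sum_inter_add_sum_sdiff F S, inter_comm]
  have hS : ∑ i ∈ S, u i ^ 2 = α + γ := (sum_inter_add_sum_sdiff S F _).symm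
  have htotal : α + β + γ ≤ 1 := by
    rw [← hF, ← sum_union disjoint_sdiff]
    exact (sum_le_sum_of_subset_of_nonneg (subset_univ _) fun i _ _ => sq_nonneg _).trans hu
  have hγβ : γ ≤ β := sum_sdiff_le_sum_sdiff_of_card_le (fun i => sq_nonneg _) hSF
    fun i hi j hj => sq_le_sq.mpr (hFtop i hi j hj)
  have hγ : 0 ≤ γ := sum_nonneg fun i _ => sq_nonneg _
  have hbessel := sum_sq_transpose_mulVec_le_of_support hV hVS u
  have hresidual := sum_sq_inter_sub_le hV hVS u F two_pos
  rw [hS] at hbessel hresidual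
  rw [hF, le_div_iff₀ (by linarith)]
  nlinarith [mul_nonneg hγ (by linarith : (0 : ℝ) ≤ 1 / 2 - Δ),
    mul_nonneg (by linarith : 0 ≤ 1 - α - β - γ) (by linarith : (0 : ℝ) ≤ 3 - 5 * Δ)]

theorem truncation_to_proper_hypothesis_general {d k s : ℕ}
    (V : Matrix (Fin d) (Fin k) ℝ) (hV : Vᵀ * V = 1)
    (hVsupp : {i : Fin d | ∃ j, V i j ≠ 0}.ncard ≤ s)
    (u : Fin d → ℝ) (hu : ∑ i, u i ^ 2 = 1)
    (Δ : ℝ) (hΔ : Δ ∈ Set.Ioo (0 : ℝ) (1 / 2))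
    (hcorr : ∑ j, (∑ i, V i j * u i) ^ 2 ≥ 1 - Δ)
    (F : Finset (Fin d)) (hF : F.card = s)
    (hFtop : ∀ i ∈ F, ∀ j ∉ F, |u j| ≤ |u i|) :
    ∑ j, (∑ i ∈ F, V i j * u i) ^ 2 / (∑ i ∈ F, u i ^ 2) ≥ 1 - 5 * Δ := by
  classical
  set S := univ.filter fun i => ∃ j, V i j ≠ 0
  have hVS : ∀ i ∉ S, ∀ j, V i j = 0 := by simp [S]
  have hSF : S.card ≤ F.card := by
    rw [hF, ← Set.ncard_coe_finset]
    simpa [S] using hVsupp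
  rw [ge_iff_le, ← sum_div]
  exact one_sub_five_mul_le_truncation hV hVS hSF hu.le hFtop hΔ.2 hcorr

/-- Normalized `s`-truncation of an approximately-aligned `r`-sparse unit
vector remains aligned. If `u` is an `r`-sparse unit vector with `r ≥ s`,
`V` has orthonormal columns jointly supported on at most `s` coordinates,
`‖Vᵀu‖² ≥ 1 − Δ` with `Δ ∈ (0, 1/2)`, and `F` is any set of `s` coordinates of
largest magnitude of `u` (so `top_s u` keeps exactly the coordinates in `F`),
then `w = top_s(u)/‖top_s(u)‖` satisfies `‖Vᵀw‖² ≥ 1 − 5Δ`. -/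
theorem truncation_to_proper_hypothesis {d k s r : ℕ} (hsr : s ≤ r)
    (V : Matrix (Fin d) (Fin k) ℝ) (hV : Vᵀ * V = 1)
    (hVsupp : {i : Fin d | ∃ j, V i j ≠ 0}.ncard ≤ s)
    (u : Fin d → ℝ) (hu : ∑ i, u i ^ 2 = 1)
    (hur : {i : Fin d | u i ≠ 0}.ncard ≤ r)
    (Δ : ℝ) (hΔ : Δ ∈ Set.Ioo (0 : ℝ) (1 / 2))
    (hcorr : ∑ j, (∑ i, V i j * u i) ^ 2 ≥ 1 - Δ)
    (F : Finset (Fin d)) (hF : F.card = s)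
    (hFtop : ∀ i ∈ F, ∀ j ∉ F, |u j| ≤ |u i|) :
    ∑ j, (∑ i ∈ F, V i j * u i) ^ 2 / (∑ i ∈ F, u i ^ 2) ≥ 1 - 5 * Δ :=
  truncation_to_proper_hypothesis_general V hV hVsupp u hu Δ hΔ hcorr F hF hFtop
end

section
/- Let Σ be a d×d PSD matrix with eigenvalues λ₁ ≥ … ≥ λ_d and λ_k − λ_{k+1} ≥ γ·λ_k for some γ > 0, and let V ∈ ℝ^{d×k} be an orthonormal basis of the top-k eigenspace. Then for every PSD matrix X with Tr(X) = k and 0 ⪯ X ⪯ I (in particular for all X in the Fantope scaled by k satisfying the SDP relaxation constraints), ⟨Σ, VVᵀ − X⟩ ≥ (γ λ_k / 2) · ‖VVᵀ − X‖_F². -/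
open Matrix

variable {n : Type*} [Fintype n] [DecidableEq n]

lemma psd_diag_nonneg {M : Matrix n n ℝ} (h : M.PosSemidef) (i : n) : 0 ≤ M i i := by
  exact h.diag_nonneg

lemma psd_trace_nonneg {M : Matrix n n ℝ} (h : M.PosSemidef) : 0 ≤ M.trace :=
  Finset.sum_nonneg fun i _ => psd_diag_nonneg h i

open scoped MatrixOrder in
lemma psd_trace_mul_nonneg {A B : Matrix n n ℝ} (hA : A.PosSemidef) (hB : B.PosSemidef) :
    0 ≤ (A * B).trace := by
  have hs : CFC.sqrt A * CFC.sqrt A = A := CFC.sqrt_mul_sqrt_self A hA.nonneg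
  have h1 : (CFC.sqrt A * CFC.sqrt A * B).trace = (A * B).trace := by rw [hs]
  have h2 : (CFC.sqrt A * CFC.sqrt A * B).trace = (CFC.sqrt A * B * CFC.sqrt A).trace := by
    rw [Matrix.mul_assoc, trace_mul_comm]
  rw [← h1, h2]
  have hherm : (CFC.sqrt A).conjTranspose = CFC.sqrt A := (CFC.sqrt_nonneg A).posSemidef.isHermitian
  have := hB.conjTranspose_mul_mul_same (CFC.sqrt A)
  rw [hherm] at this
  exact psd_trace_nonneg this

lemma trace_diagonal_mul' (dg : n → ℝ) (M : Matrix n n ℝ) :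
    (Matrix.diagonal dg * M).trace = ∑ i, dg i * M i i := by
  simp [Matrix.trace, Matrix.diag, Matrix.diagonal_mul]

set_option maxHeartbeats 1000000 in
/-- Strong-convexity-type curvature of the linear SDP objective. Let
`Σ = V diag(Λ) Vᵀ + V⊥ diag(Λ⊥) V⊥ᵀ` be a PSD eigendecomposition with
orthonormal `V ∈ ℝ^{d×k}` spanning the top-`k` eigenspace, all top-block
eigenvalues `≥ λ_k ≥ 0`, all residual eigenvalues `≤ λ_{k+1}`, and
`λ_k − λ_{k+1} ≥ γ·λ_k` for some `γ > 0`. Then for every PSD `X` with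
`Tr(X) = k` and `X ⪯ I`,
`⟨Σ, VVᵀ − X⟩ ≥ (γ λ_k / 2)·‖VVᵀ − X‖_F²`. -/
theorem sdp_curvature {d k : ℕ} (hkd : k ≤ d)
    (V : Matrix (Fin d) (Fin k) ℝ) (W : Matrix (Fin d) (Fin (d - k)) ℝ)
    (Λ : Fin k → ℝ) (Λp : Fin (d - k) → ℝ) (lamk lamk1 γ : ℝ)
    (hV : Vᵀ * V = 1) (hW : Wᵀ * W = 1) (hVW : Vᵀ * W = 0)
    (hΛ : ∀ i, lamk ≤ Λ i) (hΛp : ∀ j, 0 ≤ Λp j ∧ Λp j ≤ lamk1)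
    (hlamk : 0 ≤ lamk) (hgap : lamk - lamk1 ≥ γ * lamk) (hγ : 0 < γ)
    (Sig : Matrix (Fin d) (Fin d) ℝ)
    (hSig : Sig = V * Matrix.diagonal Λ * Vᵀ + W * Matrix.diagonal Λp * Wᵀ)
    (X : Matrix (Fin d) (Fin d) ℝ) (hX : X.PosSemidef)
    (hXtr : X.trace = (k : ℝ)) (hXle : (1 - X).PosSemidef) :
    (Sig * (V * Vᵀ - X)).trace ≥
      γ * lamk / 2 * ∑ i, ∑ j, ((V * Vᵀ - X) i j) ^ 2 := by
  subst hSig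
  have hWV : Wᵀ * V = 0 := by
    have := congrArg Matrix.transpose hVW
    simpa [Matrix.transpose_mul] using this
  have e : Fin d ≃ Fin k ⊕ Fin (d - k) :=
    (finCongr (Nat.add_sub_cancel' hkd).symm).trans finSumFinEquiv.symm
  have hcomp : V * Vᵀ + W * Wᵀ = 1 := by
    have h2 : fromRows Vᵀ Wᵀ * fromCols V W = 1 := by
      rw [fromRows_mul_fromCols, hV, hW, hVW, hWV, fromBlocks_one]
    have h1 := (fromCols_mul_fromRows_eq_one_comm e V W Vᵀ Wᵀ).mpr h2
    rwa [fromCols_mul_fromRows] at h1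
  have hVH : Vᴴ = Vᵀ := by ext i j; simp [Matrix.conjTranspose_apply]
  have hWH : Wᴴ = Wᵀ := by ext i j; simp [Matrix.conjTranspose_apply]
  set A := Vᵀ * X * V with hAdef
  set B := Wᵀ * X * W with hBdef
  have hApsd : A.PosSemidef := by
    have := hX.conjTranspose_mul_mul_same V; rwa [hVH] at this
  have hBpsd : B.PosSemidef := by
    have := hX.conjTranspose_mul_mul_same W; rwa [hWH] at this
  have hA1psd : (1 - A).PosSemidef := by
    have := hXle.conjTranspose_mul_mul_same V
    rw [hVH, Matrix.mul_sub, Matrix.mul_one, Matrix.sub_mul, hV] at this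
    exact this
  have hAle1 : ∀ i, A i i ≤ 1 := by
    intro i
    have := psd_diag_nonneg hA1psd i
    simp only [Matrix.sub_apply, Matrix.one_apply_eq] at this
    linarith
  have hB0 : ∀ j, 0 ≤ B j j := psd_diag_nonneg hBpsd
  -- auxiliary multiplication identities
  have hVVV : Vᵀ * (V * Vᵀ) = Vᵀ := by rw [← Matrix.mul_assoc, hV, Matrix.one_mul]
  have hWVz : Wᵀ * (V * Vᵀ) = 0 := by rw [← Matrix.mul_assoc, hWV, Matrix.zero_mul]
  -- trace of Sig * P
  have tSP : ((V * Matrix.diagonal Λ * Vᵀ + W * Matrix.diagonal Λp * Wᵀ) * (V * Vᵀ)).trace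
      = ∑ i, Λ i := by
    rw [add_mul, Matrix.mul_assoc (V * Matrix.diagonal Λ), hVVV,
      Matrix.mul_assoc (W * Matrix.diagonal Λp), hWVz, Matrix.mul_zero, add_zero,
      trace_mul_comm, ← Matrix.mul_assoc, hV, Matrix.one_mul, trace_diagonal]
  -- trace of Sig * X
  have tVX : (V * Matrix.diagonal Λ * Vᵀ * X).trace = ∑ i, Λ i * A i i := by
    rw [Matrix.mul_assoc, Matrix.mul_assoc, trace_mul_comm, Matrix.mul_assoc,
      ← hAdef, trace_diagonal_mul']
  have tWX : (W * Matrix.diagonal Λp * Wᵀ * X).trace = ∑ j, Λp j * B j j := by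
    rw [Matrix.mul_assoc, Matrix.mul_assoc, trace_mul_comm, Matrix.mul_assoc,
      ← hBdef, trace_diagonal_mul']
  -- trace A + trace B = k
  have hAt : A.trace = ((V * Vᵀ) * X).trace := by
    rw [hAdef, trace_mul_comm, ← Matrix.mul_assoc, trace_mul_comm]
  have hBt : B.trace = ((W * Wᵀ) * X).trace := by
    rw [hBdef, trace_mul_comm, ← Matrix.mul_assoc, trace_mul_comm]
  have key2 : A.trace + B.trace = (k : ℝ) := by
    rw [hAt, hBt, ← trace_add, ← Matrix.add_mul, hcomp, Matrix.one_mul, hXtr]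
  -- Frobenius norm squared
  set M := V * Vᵀ - X with hMdef
  have hXsym : Xᵀ = X := by
    have := hX.isHermitian
    rwa [Matrix.IsHermitian, show Xᴴ = Xᵀ by ext i j; simp [Matrix.conjTranspose_apply]] at this
  have hMsymm : Mᵀ = M := by
    rw [hMdef, Matrix.transpose_sub, Matrix.transpose_mul, Matrix.transpose_transpose, hXsym]
  have hMsym : ∀ i j, M j i = M i j := by
    intro i j
    calc M j i = Mᵀ i j := rfl
      _ = M i j := by rw [hMsymm]
  have hS : ∑ i, ∑ j, (M i j) ^ 2 = (M * M).trace := by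
    simp only [Matrix.trace, Matrix.diag, Matrix.mul_apply]
    refine Finset.sum_congr rfl fun i _ => Finset.sum_congr rfl fun j _ => ?_
    rw [sq, hMsym j i]
  have tPP : ((V * Vᵀ) * (V * Vᵀ)).trace = (k : ℝ) := by
    rw [Matrix.mul_assoc, hVVV, trace_mul_comm, hV, trace_one]
    simp
  have tPX : ((V * Vᵀ) * X).trace = A.trace := hAt.symm
  have tXP : (X * (V * Vᵀ)).trace = A.trace := by rw [trace_mul_comm]; exact hAt.symm
  have tXX : (X * X).trace ≤ (k : ℝ) := by
    have h0 := psd_trace_mul_nonneg hXle hX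
    rw [Matrix.sub_mul, Matrix.one_mul, trace_sub] at h0
    linarith [h0, hXtr.le, hXtr.ge]
  have expand : M * M = (V * Vᵀ) * (V * Vᵀ) - (V * Vᵀ) * X - X * (V * Vᵀ) + X * X := by
    rw [hMdef]; noncomm_ring
  have hSle : ∑ i, ∑ j, (M i j) ^ 2 ≤ 2 * B.trace := by
    rw [hS, expand, trace_add, trace_sub, trace_sub, tPP, tPX, tXP]
    linarith [tXX, key2]
  -- lower bound on the objective
  have hLHS : ((V * Matrix.diagonal Λ * Vᵀ + W * Matrix.diagonal Λp * Wᵀ) * M).trace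
      = (∑ i, Λ i) - ((∑ i, Λ i * A i i) + ∑ j, Λp j * B j j) := by
    rw [hMdef, Matrix.mul_sub, trace_sub, tSP, Matrix.add_mul, trace_add, tVX, tWX]
  have h1 : lamk * ((k : ℝ) - A.trace) ≤ ∑ i, Λ i * (1 - A i i) := by
    have heq : ∑ i, lamk * (1 - A i i) = lamk * ((k : ℝ) - A.trace) := by
      rw [← Finset.mul_sum, Finset.sum_sub_distrib]
      simp [Matrix.trace, Matrix.diag]
    rw [← heq]
    refine Finset.sum_le_sum fun i _ => ?_
    have hnn : 0 ≤ 1 - A i i := by linarith [hAle1 i]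
    exact mul_le_mul_of_nonneg_right (hΛ i) hnn
  have h2 : ∑ j, Λp j * B j j ≤ lamk1 * B.trace := by
    have heq : ∑ j, lamk1 * B j j = lamk1 * B.trace := by
      rw [← Finset.mul_sum]; rfl
    rw [← heq]
    exact Finset.sum_le_sum fun j _ => mul_le_mul_of_nonneg_right (hΛp j).2 (hB0 j)
  have hsplit : ∑ i, Λ i * (1 - A i i) = (∑ i, Λ i) - ∑ i, Λ i * A i i := by
    rw [← Finset.sum_sub_distrib]
    exact Finset.sum_congr rfl fun i _ => by ring
  have htB : 0 ≤ B.trace := psd_trace_nonneg hBpsd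
  have hgl : 0 ≤ γ * lamk := mul_nonneg hγ.le hlamk
  have c2 : γ * lamk * B.trace ≤ (lamk - lamk1) * B.trace :=
    mul_le_mul_of_nonneg_right hgap htB
  have c1 : γ * lamk / 2 * ∑ i, ∑ j, (M i j) ^ 2 ≤ γ * lamk / 2 * (2 * B.trace) :=
    mul_le_mul_of_nonneg_left hSle (by positivity)
  rw [ge_iff_le, hLHS]
  have hkA : (k : ℝ) - A.trace = B.trace := by linarith [key2]
  nlinarith [h1, h2, hsplit, c1, c2, hkA]
end

section
/- For every Δ, γ ∈ (0,1) and d ≥ 4, there exists a PSD matrix Σ ∈ ℝ^{d×d} with (1−γ)λ₂(Σ) ≥ λ₃(Σ) whose top two eigenvectors v₁, v₂ are supported on a common 2-element coordinate set, and a 3-sparse unit vector u with ⟨u, v₁⟩² ≥ 1 − Δ, such that with P = I − uuᵀ, the top eigenvector of PΣP has all d coordinates nonzero. -/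
open Matrix

section Helpers
variable {n : Type*} [Fintype n] [DecidableEq n]

lemma vecMulVec_mulVec' (x y w : n → ℝ) :
    vecMulVec x y *ᵥ w = (y ⬝ᵥ w) • x := by
  funext i
  simp only [mulVec, vecMulVec_apply, dotProduct, Pi.smul_apply, smul_eq_mul, Finset.sum_mul]
  exact Finset.sum_congr rfl fun j _ => by ring

lemma posSemidef_smul_vecMulVec {c : ℝ} (hc : 0 ≤ c) (x : n → ℝ) :
    (c • vecMulVec x x).PosSemidef := by
  refine posSemidef_iff_dotProduct_mulVec.mpr ⟨?_, ?_⟩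
  · ext i j
    simp [vecMulVec_apply, mul_comm]
  · intro w
    have h1 : (c • vecMulVec x x) *ᵥ w = (c * (x ⬝ᵥ w)) • x := by
      rw [smul_mulVec, vecMulVec_mulVec', smul_smul]
    have h2 : star w ⬝ᵥ ((c * (x ⬝ᵥ w)) • x) = c * (x ⬝ᵥ w) ^ 2 := by
      simp only [star_trivial, dotProduct_smul, smul_eq_mul]
      rw [dotProduct_comm]
      ring
    rw [h1, h2]
    positivity

lemma top_eigen [Nonempty n] (M : Matrix n n ℝ) (hM : M.IsHermitian) :
    ∃ μ : ℝ, (∃ w : n → ℝ, w ≠ 0 ∧ M *ᵥ w = μ • w) ∧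
      (μ • (1 : Matrix n n ℝ) - M).PosSemidef := by
  obtain ⟨i₀, hmax⟩ := Finite.exists_max hM.eigenvalues
  refine ⟨hM.eigenvalues i₀, ⟨hM.eigenvectorBasis i₀, ?_, hM.mulVec_eigenvectorBasis i₀⟩, ?_⟩
  · intro h
    exact hM.eigenvectorBasis.orthonormal.ne_zero i₀ (by ext j; exact congrFun h j)
  · have hU : (hM.eigenvectorUnitary : Matrix n n ℝ) * star (hM.eigenvectorUnitary : Matrix n n ℝ) = 1 :=
      (Matrix.mem_unitaryGroup_iff).mp hM.eigenvectorUnitary.2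
    have key : hM.eigenvalues i₀ • (1 : Matrix n n ℝ) - M =
        (hM.eigenvectorUnitary : Matrix n n ℝ) *
          diagonal (fun i => hM.eigenvalues i₀ - hM.eigenvalues i) *
          (hM.eigenvectorUnitary : Matrix n n ℝ)ᴴ := by
      have hst := hM.spectral_theorem
      rw [Unitary.conjStarAlgAut_apply] at hst
      have hdg : diagonal (fun i => hM.eigenvalues i₀ - hM.eigenvalues i)
          = hM.eigenvalues i₀ • (1 : Matrix n n ℝ) - diagonal (RCLike.ofReal ∘ hM.eigenvalues) := by
        rw [smul_one_eq_diagonal, ← diagonal_sub]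
        congr 1
      rw [hdg, Matrix.mul_sub, Matrix.sub_mul, ← Matrix.star_eq_conjTranspose, ← hst]
      congr 1
      rw [Matrix.mul_smul, Matrix.mul_one, Matrix.smul_mul, hU]
    rw [key]
    exact (posSemidef_diagonal_iff.mpr fun i => sub_nonneg.2 (hmax i)).mul_mul_conjTranspose_same _

lemma mul_vecMulVec_mul (P : Matrix n n ℝ) (hP : Pᵀ = P) (x y : n → ℝ) :
    P * vecMulVec x y * P = vecMulVec (P *ᵥ x) (P *ᵥ y) := by
  ext i j
  have hsym : ∀ a b, P a b = P b a := fun a b => by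
    conv_lhs => rw [← hP]
    rfl
  simp only [mul_apply, vecMulVec_apply, mulVec, dotProduct]
  calc ∑ l, (∑ k, P i k * (x k * y l)) * P l j
      = ∑ l, (∑ k, P i k * x k) * (y l * P j l) := by
        refine Finset.sum_congr rfl fun l _ => ?_
        rw [Finset.sum_mul, hsym l j, Finset.sum_mul]
        exact Finset.sum_congr rfl fun k _ => by ring
      _ = (∑ k, P i k * x k) * ∑ l, P j l * y l := by
        rw [Finset.mul_sum]
        exact Finset.sum_congr rfl fun l _ => by ring

end Helpers

set_option maxHeartbeats 1000000 in
/-- Barrier for sparse PCA deflation. For every `Δ, γ ∈ (0,1)` and `d ≥ 4`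
there is a PSD matrix `Σ` whose top two eigenvectors `v₁, v₂` (with
eigenvalues `lam₁ ≥ lam₂ > 0`, all other eigenvalues at most
`(1−γ)·lam₂`, i.e. `(1−γ)λ₂(Σ) ≥ λ₃(Σ)`) are supported on a common
`2`-element coordinate set, together with a `3`-sparse unit vector `u` with
`⟨u, v₁⟩² ≥ 1 − Δ`, such that, setting `P = I − uuᵀ`, the top eigenvector of
`PΣP` has all `d` coordinates nonzero. -/
theorem deflation_barrier (d : ℕ) (hd : 4 ≤ d) (Δ γ : ℝ)
    (hΔ : Δ ∈ Set.Ioo (0 : ℝ) 1) (hγ : γ ∈ Set.Ioo (0 : ℝ) 1) :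
    ∃ (Sig : Matrix (Fin d) (Fin d) ℝ) (lam1 lam2 : ℝ)
      (v1 v2 u : Fin d → ℝ) (S : Finset (Fin d)),
      Sig.PosSemidef ∧
      Sig *ᵥ v1 = lam1 • v1 ∧ Sig *ᵥ v2 = lam2 • v2 ∧
      lam2 ≤ lam1 ∧ 0 < lam2 ∧
      v1 ⬝ᵥ v1 = 1 ∧ v2 ⬝ᵥ v2 = 1 ∧ v1 ⬝ᵥ v2 = 0 ∧
      -- all eigenvalues outside span{v₁,v₂} are at most (1−γ)·lam2,
      -- i.e. (1−γ)·λ₂(Σ) ≥ λ₃(Σ):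
      (∀ w : Fin d → ℝ, w ⬝ᵥ v1 = 0 → w ⬝ᵥ v2 = 0 →
        w ⬝ᵥ (Sig *ᵥ w) ≤ (1 - γ) * lam2 * (w ⬝ᵥ w)) ∧
      -- v₁, v₂ supported on a common 2-element set:
      S.card ≤ 2 ∧ (∀ i, v1 i ≠ 0 → i ∈ S) ∧ (∀ i, v2 i ≠ 0 → i ∈ S) ∧
      -- u is a 3-sparse unit vector well-correlated with v₁:
      {i : Fin d | u i ≠ 0}.ncard ≤ 3 ∧ u ⬝ᵥ u = 1 ∧ (u ⬝ᵥ v1) ^ 2 ≥ 1 - Δ ∧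
      -- the top eigenvector of PΣP has full support:
      (∀ P M : Matrix (Fin d) (Fin d) ℝ,
        P = 1 - Matrix.vecMulVec u u → M = P * Sig * P →
        ∃ μ : ℝ,
          (∃ w : Fin d → ℝ, w ≠ 0 ∧ M *ᵥ w = μ • w) ∧
          (∀ (μ' : ℝ) (w : Fin d → ℝ), w ≠ 0 → M *ᵥ w = μ' • w → μ' ≤ μ) ∧
          (∀ w : Fin d → ℝ, w ≠ 0 → M *ᵥ w = μ • w → ∀ i, w i ≠ 0)) := by
  obtain ⟨hΔ0, hΔ1⟩ := hΔ
  obtain ⟨hγ0, hγ1⟩ := hγ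
  -- numeric parameters
  set T : ℝ := Δ / 2 with hTdef
  have hT0 : 0 < T := by positivity
  have hT1 : T < 1/2 := by simp only [hTdef]; linarith
  set t : ℝ := Real.sqrt T with htdef
  have ht0 : 0 < t := Real.sqrt_pos.mpr hT0
  have ht2 : t ^ 2 = T := Real.sq_sqrt hT0.le
  set p : ℝ := Real.sqrt (1 - T) with hpdef
  have hp0 : 0 < p := Real.sqrt_pos.mpr (by linarith)
  have hp2 : p ^ 2 = 1 - T := Real.sq_sqrt (by linarith)
  set c0 : ℝ := (Real.sqrt 2)⁻¹ with hc0def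
  have hc00 : 0 < c0 := by positivity
  have hc0sq : c0 ^ 2 = 1/2 := by
    rw [hc0def, inv_pow, Real.sq_sqrt (by norm_num : (0:ℝ) ≤ 2)]
    norm_num
  set cc : ℝ := (1 - γ)/2 with hccdef
  have hcc0 : 0 < cc := by simp only [hccdef]; linarith
  have hccle : cc ≤ 1 - γ := by simp only [hccdef]; linarith
  set lam1 : ℝ := 2 / T ^ 2 with hlam1def
  have hlam1pos : 0 < lam1 := by positivity
  have hlam1T : lam1 * T ^ 2 = 2 := by
    rw [hlam1def]; field_simp
  have hlam1ge : (1:ℝ) ≤ lam1 := by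
    rw [hlam1def, le_div_iff₀ (by positivity)]
    nlinarith
  have hd3 : (0:ℝ) < (d:ℝ) - 3 := by
    have : (4:ℝ) ≤ (d:ℝ) := by exact_mod_cast hd
    linarith
  set κ : ℝ := (Real.sqrt ((d:ℝ) - 3))⁻¹ with hκdef
  have hκ0 : 0 < κ := by positivity
  have hκ2 : κ ^ 2 = ((d:ℝ) - 3)⁻¹ := by
    rw [hκdef, inv_pow, Real.sq_sqrt hd3.le]
  -- indices
  have h0d : 0 < d := by omega
  have h1d : 1 < d := by omega
  have h2d : 2 < d := by omega
  set i0 : Fin d := ⟨0, h0d⟩ with hi0def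
  set i1 : Fin d := ⟨1, h1d⟩ with hi1def
  set i2 : Fin d := ⟨2, h2d⟩ with hi2def
  have hne01 : i0 ≠ i1 := by simp [hi0def, hi1def, Fin.ext_iff]
  have hne02 : i0 ≠ i2 := by simp [hi0def, hi2def, Fin.ext_iff]
  have hne12 : i1 ≠ i2 := by simp [hi1def, hi2def, Fin.ext_iff]
  -- vectors
  set e : Fin d → Fin d → ℝ := fun k => Pi.single k 1 with hedef
  set y : Fin d → ℝ := fun j => if 3 ≤ (j:ℕ) then κ else 0 with hydef
  have hee : ∀ k l : Fin d, e k ⬝ᵥ e l = if k = l then 1 else 0 := by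
    intro k l
    rw [hedef]
    simp only [single_dotProduct, one_mul, Pi.single_apply]
  have hey : ∀ k : Fin d, e k ⬝ᵥ y = y k := by
    intro k; rw [hedef]; simp [single_dotProduct]
  have hye : ∀ k : Fin d, y ⬝ᵥ e k = y k := by
    intro k; rw [hedef]; simp [dotProduct_single]
  have hy0 : y i0 = 0 := by simp [hydef, hi0def]
  have hy1 : y i1 = 0 := by simp [hydef, hi1def]
  have hy2 : y i2 = 0 := by simp [hydef, hi2def]
  have hfilter : Finset.univ.filter (fun j : Fin d => 3 ≤ (j:ℕ)) = Finset.univ \ {i0, i1, i2} := by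
    ext j
    simp only [Finset.mem_filter, Finset.mem_univ, true_and, Finset.mem_sdiff,
      Finset.mem_insert, Finset.mem_singleton, hi0def, hi1def, hi2def, Fin.ext_iff]
    omega
  have hcard3 : ({i0, i1, i2} : Finset (Fin d)).card = 3 := by
    rw [Finset.card_insert_of_notMem (by simp [hne01, hne02]),
      Finset.card_insert_of_notMem (by simp [hne12]), Finset.card_singleton]
  have hcardfilter : ((Finset.univ.filter (fun j : Fin d => 3 ≤ (j:ℕ))).card : ℝ) = (d:ℝ) - 3 := by
    rw [hfilter, Finset.card_sdiff_of_subset (Finset.subset_univ _), hcard3, Finset.card_univ,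
      Fintype.card_fin]
    push_cast [Nat.cast_sub (by omega : 3 ≤ d)]
    ring
  have hyy : y ⬝ᵥ y = 1 := by
    have hstep : ∀ j : Fin d, y j * y j = if 3 ≤ (j:ℕ) then κ^2 else 0 := by
      intro j
      simp only [hydef]
      split <;> ring
    calc y ⬝ᵥ y = ∑ j : Fin d, if 3 ≤ (j:ℕ) then κ^2 else 0 :=
          Finset.sum_congr rfl fun j _ => hstep j
      _ = ∑ j ∈ Finset.univ.filter (fun j : Fin d => 3 ≤ (j:ℕ)), κ^2 :=
          (Finset.sum_filter _ _).symm
      _ = ((Finset.univ.filter (fun j : Fin d => 3 ≤ (j:ℕ))).card : ℝ) * κ^2 := by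
          rw [Finset.sum_const, nsmul_eq_mul]
      _ = 1 := by
          rw [hcardfilter, hκ2, mul_inv_cancel₀ hd3.ne']
  -- the vectors
  set v1 : Fin d → ℝ := c0 • e i0 + c0 • e i1 with hv1def
  set v2 : Fin d → ℝ := c0 • e i0 - c0 • e i1 with hv2def
  set z : Fin d → ℝ := c0 • e i2 + c0 • y with hzdef
  set u : Fin d → ℝ := (p*c0) • e i0 + (p*c0) • e i1 + t • e i2 with hudef
  -- dot product facts
  have d00 : e i0 ⬝ᵥ e i0 = 1 := by rw [hee]; simp
  have d11 : e i1 ⬝ᵥ e i1 = 1 := by rw [hee]; simp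
  have d22 : e i2 ⬝ᵥ e i2 = 1 := by rw [hee]; simp
  have d01 : e i0 ⬝ᵥ e i1 = 0 := by rw [hee]; simp [hne01]
  have d10 : e i1 ⬝ᵥ e i0 = 0 := by rw [hee]; simp [hne01.symm]
  have d02 : e i0 ⬝ᵥ e i2 = 0 := by rw [hee]; simp [hne02]
  have d20 : e i2 ⬝ᵥ e i0 = 0 := by rw [hee]; simp [hne02.symm]
  have d12 : e i1 ⬝ᵥ e i2 = 0 := by rw [hee]; simp [hne12]
  have d21 : e i2 ⬝ᵥ e i1 = 0 := by rw [hee]; simp [hne12.symm]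
  have hey0 : e i0 ⬝ᵥ y = 0 := by rw [hey, hy0]
  have hey1 : e i1 ⬝ᵥ y = 0 := by rw [hey, hy1]
  have hey2 : e i2 ⬝ᵥ y = 0 := by rw [hey, hy2]
  have hye0 : y ⬝ᵥ e i0 = 0 := by rw [hye, hy0]
  have hye1 : y ⬝ᵥ e i1 = 0 := by rw [hye, hy1]
  have hye2 : y ⬝ᵥ e i2 = 0 := by rw [hye, hy2]
  have hv1v1 : v1 ⬝ᵥ v1 = 1 := by
    simp only [hv1def, dotProduct_add, add_dotProduct, dotProduct_smul, smul_dotProduct,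
      smul_eq_mul, d00, d01, d10, d11]
    linear_combination (2:ℝ) * hc0sq
  have hv2v2 : v2 ⬝ᵥ v2 = 1 := by
    simp only [hv2def, dotProduct_sub, sub_dotProduct, dotProduct_smul, smul_dotProduct,
      smul_eq_mul, d00, d01, d10, d11]
    linear_combination (2:ℝ) * hc0sq
  have hv1v2 : v1 ⬝ᵥ v2 = 0 := by
    simp only [hv1def, hv2def, dotProduct_sub, add_dotProduct, dotProduct_smul, smul_dotProduct,
      smul_eq_mul, d00, d01, d10, d11]
    ring
  have hv2v1 : v2 ⬝ᵥ v1 = 0 := by rw [dotProduct_comm]; exact hv1v2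
  have hzv1 : z ⬝ᵥ v1 = 0 := by
    simp only [hzdef, hv1def, dotProduct_add, add_dotProduct, dotProduct_smul, smul_dotProduct,
      smul_eq_mul, d20, d21, hye0, hye1]
    ring
  have hzv2 : z ⬝ᵥ v2 = 0 := by
    simp only [hzdef, hv2def, dotProduct_sub, add_dotProduct, dotProduct_smul, smul_dotProduct,
      smul_eq_mul, d20, d21, hye0, hye1]
    ring
  have hv1z : v1 ⬝ᵥ z = 0 := by rw [dotProduct_comm]; exact hzv1
  have hv2z : v2 ⬝ᵥ z = 0 := by rw [dotProduct_comm]; exact hzv2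
  have hzz : z ⬝ᵥ z = 1 := by
    simp only [hzdef, dotProduct_add, add_dotProduct, dotProduct_smul, smul_dotProduct,
      smul_eq_mul, d22, hey2, hye2, hyy]
    linear_combination (2:ℝ) * hc0sq
  have huu : u ⬝ᵥ u = 1 := by
    simp only [hudef, dotProduct_add, add_dotProduct, dotProduct_smul, smul_dotProduct,
      smul_eq_mul, d00, d01, d02, d10, d11, d12, d20, d21, d22]
    linear_combination (2*p^2) * hc0sq + hp2 + ht2
  have huv1 : u ⬝ᵥ v1 = p := by
    simp only [hudef, hv1def, dotProduct_add, add_dotProduct, dotProduct_smul, smul_dotProduct,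
      smul_eq_mul, d00, d01, d10, d11, d20, d21]
    linear_combination (2*p) * hc0sq
  have huv2 : u ⬝ᵥ v2 = 0 := by
    simp only [hudef, hv2def, dotProduct_sub, add_dotProduct, dotProduct_smul, smul_dotProduct,
      smul_eq_mul, d00, d01, d10, d11, d20, d21]
    ring
  have huz : u ⬝ᵥ z = t * c0 := by
    simp only [hudef, hzdef, dotProduct_add, add_dotProduct, dotProduct_smul, smul_dotProduct,
      smul_eq_mul, d02, d12, d22, hey0, hey1, hey2]
    ring
  have hv1u : v1 ⬝ᵥ u = p := by rw [dotProduct_comm]; exact huv1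
  have hv2u : v2 ⬝ᵥ u = 0 := by rw [dotProduct_comm]; exact huv2
  have hzu : z ⬝ᵥ u = t * c0 := by rw [dotProduct_comm]; exact huz
  -- the matrix
  set Sig : Matrix (Fin d) (Fin d) ℝ :=
    lam1 • vecMulVec v1 v1 + (1:ℝ) • vecMulVec v2 v2 + cc • vecMulVec z z with hSigdef
  have hSigmv : ∀ w : Fin d → ℝ, Sig *ᵥ w =
      (lam1 * (v1 ⬝ᵥ w)) • v1 + (v2 ⬝ᵥ w) • v2 + (cc * (z ⬝ᵥ w)) • z := by
    intro w
    simp only [hSigdef, add_mulVec, smul_mulVec, vecMulVec_mulVec', one_smul,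
      smul_smul]
  have hSigPSD : Sig.PosSemidef :=
    ((posSemidef_smul_vecMulVec hlam1pos.le v1).add
      (posSemidef_smul_vecMulVec (by norm_num : (0:ℝ) ≤ 1) v2)).add
      (posSemidef_smul_vecMulVec hcc0.le z)
  have hwwnn : ∀ w : Fin d → ℝ, 0 ≤ w ⬝ᵥ w := by
    intro w
    exact Finset.sum_nonneg fun i _ => mul_self_nonneg _
  refine ⟨Sig, lam1, 1, v1, v2, u, {i0, i1}, hSigPSD, ?_, ?_, hlam1ge, one_pos,
    hv1v1, hv2v2, hv1v2, ?_, ?_, ?_, ?_, ?_, huu, ?_, ?_⟩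
  · rw [hSigmv, hv1v1, hv2v1, hzv1]
    simp
  · rw [hSigmv, hv1v2, hv2v2, hzv2]
    simp
  · -- third eigenvalue bound
    intro w hw1 hw2
    have hv1w : v1 ⬝ᵥ w = 0 := by rw [dotProduct_comm]; exact hw1
    have hv2w : v2 ⬝ᵥ w = 0 := by rw [dotProduct_comm]; exact hw2
    have hform : w ⬝ᵥ (Sig *ᵥ w) = cc * (z ⬝ᵥ w)^2 := by
      rw [hSigmv, dotProduct_add, dotProduct_add]
      simp only [dotProduct_smul, smul_eq_mul, hv1w, hv2w]
      rw [dotProduct_comm w z]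
      ring
    have hCS : (z ⬝ᵥ w)^2 ≤ (z ⬝ᵥ z) * (w ⬝ᵥ w) := by
      simpa [dotProduct, sq] using Finset.sum_mul_sq_le_sq_mul_sq Finset.univ z w
    rw [hzz, one_mul] at hCS
    rw [hform]
    have h1 : cc * (z ⬝ᵥ w)^2 ≤ cc * (w ⬝ᵥ w) :=
      mul_le_mul_of_nonneg_left hCS hcc0.le
    have h2 : cc * (w ⬝ᵥ w) ≤ (1 - γ) * (w ⬝ᵥ w) :=
      mul_le_mul_of_nonneg_right hccle (hwwnn w)
    calc cc * (z ⬝ᵥ w)^2 ≤ (1 - γ) * (w ⬝ᵥ w) := le_trans h1 h2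
      _ = (1 - γ) * 1 * (w ⬝ᵥ w) := by ring
  · -- card ≤ 2
    have := Finset.card_insert_le i0 ({i1} : Finset (Fin d))
    simpa using this
  · -- support of v1
    intro i hi
    by_contra hmem
    simp only [Finset.mem_insert, Finset.mem_singleton] at hmem
    push_neg at hmem
    apply hi
    simp [hv1def, hedef, Pi.single_apply, hmem.1, hmem.2]
  · -- support of v2
    intro i hi
    by_contra hmem
    simp only [Finset.mem_insert, Finset.mem_singleton] at hmem
    push_neg at hmem
    apply hi
    simp [hv2def, hedef, Pi.single_apply, hmem.1, hmem.2]
  · -- sparsity of u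
    have hsub : {i : Fin d | u i ≠ 0} ⊆ (({i0, i1, i2} : Finset (Fin d)) : Set (Fin d)) := by
      intro i hi
      simp only [Set.mem_setOf_eq] at hi
      by_contra hmem
      simp only [Finset.coe_insert, Set.mem_insert_iff, Finset.coe_singleton,
        Set.mem_singleton_iff] at hmem
      push_neg at hmem
      apply hi
      simp [hudef, hedef, Pi.single_apply, hmem.1, hmem.2.1, hmem.2.2]
    calc {i : Fin d | u i ≠ 0}.ncard
        ≤ (({i0, i1, i2} : Finset (Fin d)) : Set (Fin d)).ncard :=
          Set.ncard_le_ncard hsub (Finset.finite_toSet _)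
      _ = 3 := by rw [Set.ncard_coe_finset, hcard3]
      _ ≤ 3 := le_rfl
  · -- correlation
    rw [huv1, hp2]
    simp only [ge_iff_le, hTdef]
    linarith
  · -- the deflation part
    intro P M hP hM
    have h1T : (0:ℝ) < 1 - T := by linarith
    have hPt : Pᵀ = P := by
      rw [hP]
      have huut : (vecMulVec u u)ᵀ = vecMulVec u u := by
        ext i j
        simp [vecMulVec_apply, mul_comm]
      rw [transpose_sub, transpose_one, huut]
    have hPmv : ∀ x : Fin d → ℝ, P *ᵥ x = x - (u ⬝ᵥ x) • u := by
      intro x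
      rw [hP, sub_mulVec, one_mulVec, vecMulVec_mulVec']
    set g : Fin d → ℝ := v1 - p • u with hgdef
    set h : Fin d → ℝ := z - (t*c0) • u with hhdef
    have hPv1 : P *ᵥ v1 = g := by rw [hPmv, huv1]
    have hPv2 : P *ᵥ v2 = v2 := by rw [hPmv, huv2, zero_smul, sub_zero]
    have hPz : P *ᵥ z = h := by rw [hPmv, huz]
    have hMform : M = lam1 • vecMulVec g g + (1:ℝ) • vecMulVec v2 v2 + cc • vecMulVec h h := by
      rw [hM, hSigdef]
      simp only [Matrix.mul_add, Matrix.add_mul, Matrix.mul_smul, Matrix.smul_mul]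
      rw [mul_vecMulVec_mul P hPt v1 v1, mul_vecMulVec_mul P hPt v2 v2,
        mul_vecMulVec_mul P hPt z z, hPv1, hPv2, hPz]
    have hMapply : ∀ i j, M i j = lam1 * (g i * g j) + v2 i * v2 j + cc * (h i * h j) := by
      intro i j
      rw [hMform]
      simp [Matrix.add_apply, Matrix.smul_apply, vecMulVec_apply, smul_eq_mul]
    have hMsymm : ∀ i j, M i j = M j i := by
      intro i j
      rw [hMapply, hMapply]
      ring
    -- component values
    have hei : ∀ k i : Fin d, e k i = if i = k then 1 else 0 := fun k i => by
      rw [hedef]; exact Pi.single_apply k 1 i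
    set ε : Fin d → ℝ := fun i => if i = i0 ∨ i = i1 then (-1:ℝ) else 1 with hεdef
    have hepm : ∀ j : Fin d, ε j = 1 ∨ ε j = -1 := by
      intro j
      simp only [hεdef]
      split
      · right; rfl
      · left; rfl
    have habse : ∀ j : Fin d, |ε j| = 1 := by
      intro j
      rcases hepm j with hh | hh <;> rw [hh] <;> norm_num
    -- profiles
    have hprof : ∀ i : Fin d,
        (g i = c0*T ∧ (v2 i = c0 ∨ v2 i = -c0) ∧ h i = -(p*t*c0^2) ∧ ε i = -1 ∧ i ≠ i2)
      ∨ (g i = -(p*t) ∧ v2 i = 0 ∧ h i = c0*(1-T) ∧ ε i = 1 ∧ i = i2)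
      ∨ (g i = 0 ∧ v2 i = 0 ∧ h i = c0*κ ∧ ε i = 1 ∧ i ≠ i2) := by
      intro i
      have hclass : i = i0 ∨ i = i1 ∨ i = i2 ∨ (i ≠ i0 ∧ i ≠ i1 ∧ i ≠ i2 ∧ 3 ≤ (i:ℕ)) := by
        rcases Nat.lt_or_ge (i:ℕ) 3 with hlt | hge
        · interval_cases hiv : (i:ℕ)
          · left; rw [hi0def]; exact Fin.ext hiv
          · right; left; rw [hi1def]; exact Fin.ext hiv
          · right; right; left; rw [hi2def]; exact Fin.ext hiv
        · right; right; right
          refine ⟨?_, ?_, ?_, hge⟩ <;> intro hcon <;> subst hcon <;>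
            simp [hi0def, hi1def, hi2def] at hge <;> omega
      rcases hclass with rfl | rfl | rfl | ⟨hn0, hn1, hn2, hge⟩
      · left
        refine ⟨?_, Or.inl ?_, ?_, ?_, hne02⟩
        · simp [hgdef, hv1def, hudef, hei, hne01, hne02]
          linear_combination (-c0) * hp2
        · simp [hv2def, hei, hne01, hne02]
        · simp [hhdef, hzdef, hudef, hei, hne01, hne02, hy0]
          ring
        · simp [hεdef]
      · left
        refine ⟨?_, Or.inr ?_, ?_, ?_, hne12⟩
        · simp [hgdef, hv1def, hudef, hei, hne01.symm, hne12]
          linear_combination (-c0) * hp2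
        · simp [hv2def, hei, hne01.symm, hne12]
        · simp [hhdef, hzdef, hudef, hei, hne01.symm, hne12, hy1]
          ring
        · simp [hεdef]
      · right; left
        refine ⟨?_, ?_, ?_, ?_, rfl⟩
        · simp [hgdef, hv1def, hudef, hei, hne02.symm, hne12.symm]
        · simp [hv2def, hei, hne02.symm, hne12.symm]
        · simp [hhdef, hzdef, hudef, hei, hne02.symm, hne12.symm, hy2]
          linear_combination (-c0) * ht2
        · simp [hεdef, hne02.symm, hne12.symm]
      · right; right
        have hyi : y i = κ := by simp [hydef, hge]
        refine ⟨?_, ?_, ?_, ?_, hn2⟩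
        · simp [hgdef, hv1def, hudef, hei, hn0, hn1, hn2]
        · simp [hv2def, hei, hn0, hn1]
        · simp [hhdef, hzdef, hudef, hei, hn0, hn1, hn2, hyi]
        · simp [hεdef, hn0, hn1]
    -- positive monomials
    have hpt : 0 < p*t := mul_pos hp0 ht0
    have hc0k : 0 < c0*κ := mul_pos hc00 hκ0
    have hc01T : 0 < c0*(1-T) := mul_pos hc00 h1T
    have hptc : 0 < p*t*c0^2 := mul_pos hpt (pow_pos hc00 2)
    have m1 : 0 < lam1 * (c0*T) * (p*t) := mul_pos (mul_pos hlam1pos (mul_pos hc00 hT0)) hpt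
    have m2 : 0 < cc * ((p*t*c0^2) * (c0*(1-T))) := mul_pos hcc0 (mul_pos hptc hc01T)
    have m3 : 0 < cc * ((p*t*c0^2) * (c0*κ)) := mul_pos hcc0 (mul_pos hptc hc0k)
    have m4 : 0 < lam1 * ((p*t) * (p*t)) := mul_pos hlam1pos (mul_pos hpt hpt)
    have m5 : 0 < cc * ((c0*(1-T)) * (c0*(1-T))) := mul_pos hcc0 (mul_pos hc01T hc01T)
    have m6 : 0 < cc * ((c0*(1-T)) * (c0*κ)) := mul_pos hcc0 (mul_pos hc01T hc0k)
    have m7 : 0 < cc * ((c0*κ) * (c0*κ)) := mul_pos hcc0 (mul_pos hc0k hc0k)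
    have m8 : 0 < cc * ((p*t*c0^2) * (p*t*c0^2)) := mul_pos hcc0 (mul_pos hptc hptc)
    have mAA : lam1 * ((c0*T) * (c0*T)) = 1 := by
      have hrw : lam1 * ((c0*T) * (c0*T)) = (lam1 * T^2) * c0^2 := by ring
      rw [hrw, hlam1T, hc0sq]
      norm_num
    -- entrywise sign bounds
    have keyA : ∀ i j : Fin d, 0 ≤ ε i * ε j * M i j := by
      intro i j
      rw [hMapply i j]
      rcases hprof i with ⟨hgi, hv2i, hhi, hei', -⟩ | ⟨hgi, hv2i, hhi, hei', -⟩ |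
          ⟨hgi, hv2i, hhi, hei', -⟩ <;>
        rcases hprof j with ⟨hgj, hv2j, hhj, hej', -⟩ | ⟨hgj, hv2j, hhj, hej', -⟩ |
          ⟨hgj, hv2j, hhj, hej', -⟩ <;>
        rw [hgi, hgj, hhi, hhj, hei', hej']
      · rcases hv2i with hv | hv <;> rcases hv2j with hv' | hv' <;> rw [hv, hv'] <;>
          linarith only [mAA, m8, hc0sq]
      · rw [hv2j]; linarith only [m1, m2]
      · rw [hv2j]; linarith only [m3]
      · rw [hv2i]; linarith only [m1, m2]
      · rw [hv2i, hv2j]; linarith only [m4, m5]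
      · rw [hv2i, hv2j]; linarith only [m6]
      · rw [hv2i]; linarith only [m3]
      · rw [hv2i, hv2j]; linarith only [m6]
      · rw [hv2i, hv2j]; linarith only [m7]
    have hproftwo : g i2 = -(p*t) ∧ v2 i2 = 0 ∧ h i2 = c0*(1-T) ∧ ε i2 = 1 := by
      rcases hprof i2 with ⟨-, -, -, -, hii⟩ | ⟨h1, h2, h3, h4, -⟩ | ⟨-, -, -, -, hii⟩
      · exact absurd rfl hii
      · exact ⟨h1, h2, h3, h4⟩
      · exact absurd rfl hii
    obtain ⟨hg2, hv22, hh2, he2⟩ := hproftwo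
    have keyB : ∀ i : Fin d, 0 < ε i * ε i2 * M i i2 := by
      intro i
      rw [hMapply i i2, hg2, hv22, hh2, he2]
      rcases hprof i with ⟨hgi, hv2i, hhi, hei', -⟩ | ⟨hgi, hv2i, hhi, hei', -⟩ |
          ⟨hgi, hv2i, hhi, hei', -⟩ <;> rw [hgi, hhi, hei']
      · linarith only [m1, m2]
      · rw [hv2i]; linarith only [m4, m5]
      · rw [hv2i]; linarith only [m6]
    -- spectral part
    have hMherm : M.IsHermitian := by
      show Mᴴ = M
      ext i j
      rw [conjTranspose_apply, star_trivial]
      exact hMsymm j i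
    haveI : Nonempty (Fin d) := ⟨i0⟩
    obtain ⟨μ, hex, hPSDtop⟩ := top_eigen M hMherm
    have hquad : ∀ x : Fin d → ℝ, x ⬝ᵥ (M *ᵥ x) ≤ μ * (x ⬝ᵥ x) := by
      intro x
      have h0 := hPSDtop.dotProduct_mulVec_nonneg x
      rw [star_trivial, sub_mulVec, smul_mulVec, one_mulVec, dotProduct_sub,
        dotProduct_smul, smul_eq_mul] at h0
      linarith only [h0]
    refine ⟨μ, hex, ?_, ?_⟩
    · -- maximality
      intro μ' w hw hEig
      have h1 : w ⬝ᵥ (M *ᵥ w) = μ' * (w ⬝ᵥ w) := by rw [hEig, dotProduct_smul, smul_eq_mul]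
      have h2 := hquad w
      have hwpos : 0 < w ⬝ᵥ w := by
        rcases lt_or_eq_of_le (hwwnn w) with hlt | heq
        · exact hlt
        · exact absurd (dotProduct_self_eq_zero.mp heq.symm) hw
      rw [h1] at h2
      exact le_of_mul_le_mul_right h2 hwpos
    · -- density of top eigenvectors
      intro w hw hEig i hwi
      set x : Fin d → ℝ := fun j => ε j * |w j| with hxdef
      have hxj : ∀ j, x j = ε j * |w j| := fun j => rfl
      have hxx : x ⬝ᵥ x = w ⬝ᵥ w := by
        refine Finset.sum_congr rfl fun j _ => ?_
        have hstep : x j * x j = |w j| * |w j| := by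
          rcases hepm j with hh | hh <;> rw [hxj, hh] <;> ring
        rw [hstep, abs_mul_abs_self]
      have habs : ∀ i' j', ε i' * ε j' * M i' j' = |M i' j'| := by
        intro i' j'
        have h1 : |ε i' * ε j' * M i' j'| = |M i' j'| := by
          rw [abs_mul, abs_mul, habse, habse, one_mul, one_mul]
        rw [← h1, abs_of_nonneg (keyA i' j')]
      have hpt2 : ∀ i' j', M i' j' * w i' * w j' ≤ M i' j' * x i' * x j' := by
        intro i' j'
        calc M i' j' * w i' * w j' ≤ |M i' j' * w i' * w j'| := le_abs_self _
          _ = |M i' j'| * |w i'| * |w j'| := by rw [abs_mul, abs_mul]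
          _ = (ε i' * ε j' * M i' j') * (|w i'| * |w j'|) := by rw [habs]; ring
          _ = M i' j' * x i' * x j' := by rw [hxj, hxj]; ring
      have hsum : w ⬝ᵥ (M *ᵥ w) ≤ x ⬝ᵥ (M *ᵥ x) := by
        simp only [dotProduct, mulVec]
        refine Finset.sum_le_sum fun i' _ => ?_
        rw [Finset.mul_sum, Finset.mul_sum]
        refine Finset.sum_le_sum fun j' _ => ?_
        calc w i' * (M i' j' * w j') = M i' j' * w i' * w j' := by ring
          _ ≤ M i' j' * x i' * x j' := hpt2 i' j'
          _ = x i' * (M i' j' * x j') := by ring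
      have h1 : w ⬝ᵥ (M *ᵥ w) = μ * (w ⬝ᵥ w) := by rw [hEig, dotProduct_smul, smul_eq_mul]
      have heq : x ⬝ᵥ (M *ᵥ x) = μ * (x ⬝ᵥ x) := by
        have h3 := hquad x
        rw [hxx] at h3 ⊢
        linarith only [hsum, h1, h3]
      have hker : (μ • (1:Matrix (Fin d) (Fin d) ℝ) - M) *ᵥ x = 0 := by
        have hz : star x ⬝ᵥ ((μ • (1:Matrix (Fin d) (Fin d) ℝ) - M) *ᵥ x) = 0 := by
          rw [star_trivial, sub_mulVec, smul_mulVec, one_mulVec, dotProduct_sub,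
            dotProduct_smul, smul_eq_mul, heq]
          ring
        exact (hPSDtop.dotProduct_mulVec_zero_iff x).mp hz
      have hMx : M *ᵥ x = μ • x := by
        rw [sub_mulVec, smul_mulVec, one_mulVec] at hker
        exact (sub_eq_zero.mp hker).symm
      have hcoord : ∀ i', (∑ j, M i' j * x j) = μ * x i' := by
        intro i'
        have h4 := congrFun hMx i'
        simpa [mulVec, dotProduct, Pi.smul_apply, smul_eq_mul] using h4
      have hrowzero : ∀ i', x i' = 0 → ∀ j, (ε i' * ε j * M i' j) * |w j| = 0 := by
        intro i' hxi' j
        have hsz : ∑ j, (ε i' * ε j * M i' j) * |w j| = 0 := by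
          have h5 : ∑ j, (ε i' * ε j * M i' j) * |w j| = ε i' * ∑ j, M i' j * x j := by
            rw [Finset.mul_sum]
            refine Finset.sum_congr rfl fun j' _ => ?_
            rw [hxj]; ring
          rw [h5, hcoord, hxi', mul_zero, mul_zero]
        exact (Finset.sum_eq_zero_iff_of_nonneg
          (fun j' _ => mul_nonneg (keyA i' j') (abs_nonneg _))).mp hsz j (Finset.mem_univ j)
      have hxi : x i = 0 := by rw [hxj, hwi, abs_zero, mul_zero]
      have hw2 : |w i2| = 0 :=
        (mul_eq_zero.mp (hrowzero i hxi i2)).resolve_left (ne_of_gt (keyB i))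
      have hx2 : x i2 = 0 := by rw [hxj, hw2, mul_zero]
      have hall : ∀ j, w j = 0 := by
        intro j
        have h6 := hrowzero i2 hx2 j
        have h7 : ε i2 * ε j * M i2 j = ε j * ε i2 * M j i2 := by rw [hMsymm i2 j]; ring
        rw [h7] at h6
        exact abs_eq_zero.mp ((mul_eq_zero.mp h6).resolve_left (ne_of_gt (keyB j)))
      exact hw (funext hall)
end

section
/- With Σ = (1/Δ)·v₁v₁ᵀ + v₂v₂ᵀ + (1−γ)·wwᵀ where v₁ = (e₁+e₂)/√2, v₂ = (e₁−e₂)/√2, q = (1/√(d−3))·∑_{i=4}^d e_i, w = (e₃+q)/√2, and u = √(1−Δ)·v₁ + √Δ·e₃, P = I − uuᵀ: the span of PΣP equals span{t, v₂, q} where t = √Δ·v₁ − √(1−Δ)·e₃, and the compression of PΣP to the invariant subspace span{t, q} equals the 2×2 matrix [[1 + (1−γ)(1−Δ)/2, −(1−γ)√(1−Δ)/2], [−(1−γ)√(1−Δ)/2, (1−γ)/2]] in the orthonormal basis (t, q). -/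
open Matrix

namespace DeflationBarrierExample

variable (d : ℕ) (Δ γ : ℝ)

/-- The `j`-th standard basis vector of `ℝ^d` (0-indexed). -/
noncomputable def e (j : ℕ) : Fin d → ℝ := fun i => if i.val = j then 1 else 0

/-- `v₁ = (e₁ + e₂)/√2`. -/
noncomputable def v1 : Fin d → ℝ := (Real.sqrt 2)⁻¹ • (e d 0 + e d 1)

/-- `v₂ = (e₁ − e₂)/√2`. -/
noncomputable def v2 : Fin d → ℝ := (Real.sqrt 2)⁻¹ • (e d 0 - e d 1)

/-- `q = (1/√(d−3))·∑_{i=4}^d e_i`. -/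
noncomputable def qv : Fin d → ℝ :=
  fun i => if 3 ≤ i.val then (Real.sqrt ((d : ℝ) - 3))⁻¹ else 0

/-- `w = (e₃ + q)/√2`. -/
noncomputable def wv : Fin d → ℝ := (Real.sqrt 2)⁻¹ • (e d 2 + qv d)

/-- `u = √(1−Δ)·v₁ + √Δ·e₃`. -/
noncomputable def uv : Fin d → ℝ :=
  Real.sqrt (1 - Δ) • v1 d + Real.sqrt Δ • e d 2

/-- `t = √Δ·v₁ − √(1−Δ)·e₃`. -/
noncomputable def tv : Fin d → ℝ :=
  Real.sqrt Δ • v1 d - Real.sqrt (1 - Δ) • e d 2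

/-- `Σ = (1/Δ)·v₁v₁ᵀ + v₂v₂ᵀ + (1−γ)·wwᵀ`. -/
noncomputable def Sig : Matrix (Fin d) (Fin d) ℝ :=
  Δ⁻¹ • Matrix.vecMulVec (v1 d) (v1 d) + Matrix.vecMulVec (v2 d) (v2 d) +
    (1 - γ) • Matrix.vecMulVec (wv d) (wv d)

/-- `P = I − uuᵀ`. -/
noncomputable def Pm : Matrix (Fin d) (Fin d) ℝ :=
  1 - Matrix.vecMulVec (uv d Δ) (uv d Δ)

/-- The deflated matrix `M = PΣP`. -/
noncomputable def Mm : Matrix (Fin d) (Fin d) ℝ :=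
  Pm d Δ * Sig d Δ γ * Pm d Δ

lemma vecMulVec_mulVec' (a b x : Fin d → ℝ) :
    Matrix.vecMulVec a b *ᵥ x = (b ⬝ᵥ x) • a := by
  funext i
  simp only [Matrix.mulVec, Matrix.vecMulVec_apply, dotProduct, Pi.smul_apply, smul_eq_mul,
    Finset.sum_mul]
  exact Finset.sum_congr rfl fun j _ => by ring

lemma e_dot (j : ℕ) (hj : j < d) (x : Fin d → ℝ) : e d j ⬝ᵥ x = x ⟨j, hj⟩ := by
  unfold e
  rw [dotProduct, Finset.sum_eq_single (⟨j, hj⟩ : Fin d)]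
  · simp
  · intro b _ hb
    have : b.val ≠ j := fun h => hb (Fin.ext h)
    simp [this]
  · simp

lemma e_dot_e (i j : ℕ) (hi : i < d) (hj : j < d) :
    e d i ⬝ᵥ e d j = if i = j then 1 else 0 := by
  rw [e_dot d i hi]
  simp [e]

lemma e_dot_q (j : ℕ) (hj : j < d) :
    e d j ⬝ᵥ qv d = if 3 ≤ j then (Real.sqrt ((d : ℝ) - 3))⁻¹ else 0 := by
  rw [e_dot d j hj]
  rfl

lemma dot_qq (hd : 4 ≤ d) : qv d ⬝ᵥ qv d = 1 := by
  have hd' : (4:ℝ) ≤ (d:ℝ) := by exact_mod_cast hd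
  have hs : Real.sqrt ((d:ℝ)-3) * Real.sqrt ((d:ℝ)-3) = (d:ℝ)-3 :=
    Real.mul_self_sqrt (by linarith)
  unfold qv
  rw [dotProduct]
  have key : ∀ i : Fin d,
      (if 3 ≤ i.val then (Real.sqrt ((d:ℝ)-3))⁻¹ else 0) *
        (if 3 ≤ i.val then (Real.sqrt ((d:ℝ)-3))⁻¹ else 0) =
      if 3 ≤ i.val then ((d:ℝ)-3)⁻¹ else 0 := by
    intro i
    split
    · rw [← mul_inv, hs]
    · ring
  simp_rw [key]
  rw [Fin.sum_univ_eq_sum_range (fun j => if 3 ≤ j then ((d:ℝ)-3)⁻¹ else 0) d]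
  rw [Finset.sum_ite, Finset.sum_const, Finset.sum_const_zero, add_zero]
  have hfil : (Finset.range d).filter (fun j => 3 ≤ j) = Finset.Ico 3 d := by
    ext x
    simp [Finset.mem_Ico, and_comm]
  rw [hfil, Nat.card_Ico, nsmul_eq_mul]
  have : ((d - 3 : ℕ) : ℝ) = (d:ℝ) - 3 := by
    have : 3 ≤ d := by omega
    push_cast [this]
    ring
  rw [this]
  exact mul_inv_cancel₀ (by linarith)

set_option maxHeartbeats 2000000 in
/-- With the explicit construction above (`d ≥ 4`, `Δ, γ ∈ (0,1)`): the column
span of `PΣP` equals `span{t, v₂, q}`, and the compression of `PΣP` to the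
invariant subspace `span{t, q}` in the orthonormal basis `(t, q)` is the `2×2`
matrix `[[1 + (1−γ)(1−Δ)/2, −(1−γ)√(1−Δ)/2], [−(1−γ)√(1−Δ)/2, (1−γ)/2]]`. -/
theorem deflated_span_and_compression (hd : 4 ≤ d)
    (hΔ : Δ ∈ Set.Ioo (0 : ℝ) 1) (hγ : γ ∈ Set.Ioo (0 : ℝ) 1) :
    LinearMap.range (Mm d Δ γ).mulVecLin =
        Submodule.span ℝ {tv d Δ, v2 d, qv d} ∧
    tv d Δ ⬝ᵥ (Mm d Δ γ *ᵥ tv d Δ) = 1 + (1 - γ) * (1 - Δ) / 2 ∧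
    tv d Δ ⬝ᵥ (Mm d Δ γ *ᵥ qv d) = -((1 - γ) * Real.sqrt (1 - Δ) / 2) ∧
    qv d ⬝ᵥ (Mm d Δ γ *ᵥ tv d Δ) = -((1 - γ) * Real.sqrt (1 - Δ) / 2) ∧
    qv d ⬝ᵥ (Mm d Δ γ *ᵥ qv d) = (1 - γ) / 2 := by
  obtain ⟨hΔ0, hΔ1⟩ := hΔ
  obtain ⟨hγ0, hγ1⟩ := hγ
  have h0 : 0 < d := by omega
  have h1 : 1 < d := by omega
  have h2 : 2 < d := by omega
  have hδ : Real.sqrt Δ * Real.sqrt Δ = Δ := Real.mul_self_sqrt hΔ0.le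
  have hδ' : Real.sqrt (1-Δ) * Real.sqrt (1-Δ) = 1-Δ := Real.mul_self_sqrt (by linarith)
  have hr : Real.sqrt 2 * Real.sqrt 2 = 2 := Real.mul_self_sqrt (by norm_num)
  have hr0 : Real.sqrt 2 ≠ 0 := by positivity
  have hΔne : Δ ≠ 0 := ne_of_gt hΔ0
  have hγne : (1:ℝ) - γ ≠ 0 := by linarith
  have hΔi : Δ⁻¹ * Δ = 1 := inv_mul_cancel₀ hΔne
  have hγi : ((1:ℝ)-γ)⁻¹ * (1-γ) = 1 := inv_mul_cancel₀ hγne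
  have hhalf : (Real.sqrt 2)⁻¹ * (Real.sqrt 2)⁻¹ = 1/2 := by
    rw [← mul_inv, hr]
    norm_num
  -- base dot products
  have ee00 : e d 0 ⬝ᵥ e d 0 = 1 := by rw [e_dot_e d 0 0 h0 h0]; norm_num
  have ee01 : e d 0 ⬝ᵥ e d 1 = 0 := by rw [e_dot_e d 0 1 h0 h1]; norm_num
  have ee02 : e d 0 ⬝ᵥ e d 2 = 0 := by rw [e_dot_e d 0 2 h0 h2]; norm_num
  have ee10 : e d 1 ⬝ᵥ e d 0 = 0 := by rw [e_dot_e d 1 0 h1 h0]; norm_num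
  have ee11 : e d 1 ⬝ᵥ e d 1 = 1 := by rw [e_dot_e d 1 1 h1 h1]; norm_num
  have ee12 : e d 1 ⬝ᵥ e d 2 = 0 := by rw [e_dot_e d 1 2 h1 h2]; norm_num
  have ee20 : e d 2 ⬝ᵥ e d 0 = 0 := by rw [e_dot_e d 2 0 h2 h0]; norm_num
  have ee21 : e d 2 ⬝ᵥ e d 1 = 0 := by rw [e_dot_e d 2 1 h2 h1]; norm_num
  have ee22 : e d 2 ⬝ᵥ e d 2 = 1 := by rw [e_dot_e d 2 2 h2 h2]; norm_num
  have eq0 : e d 0 ⬝ᵥ qv d = 0 := by rw [e_dot_q d 0 h0]; norm_num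
  have eq1 : e d 1 ⬝ᵥ qv d = 0 := by rw [e_dot_q d 1 h1]; norm_num
  have eq2 : e d 2 ⬝ᵥ qv d = 0 := by rw [e_dot_q d 2 h2]; norm_num
  have qe0 : qv d ⬝ᵥ e d 0 = 0 := by rw [dotProduct_comm]; exact eq0
  have qe1 : qv d ⬝ᵥ e d 1 = 0 := by rw [dotProduct_comm]; exact eq1
  have qe2 : qv d ⬝ᵥ e d 2 = 0 := by rw [dotProduct_comm]; exact eq2
  have qq : qv d ⬝ᵥ qv d = 1 := dot_qq d hd
  -- derived dot products among v1, v2, e2, qv, wv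
  have v11 : v1 d ⬝ᵥ v1 d = 1 := by
    simp only [v1, smul_dotProduct, dotProduct_smul, add_dotProduct, dotProduct_add,
      ee00, ee01, ee10, ee11, smul_eq_mul]
    field_simp
    linear_combination -hr
  have v22 : v2 d ⬝ᵥ v2 d = 1 := by
    simp only [v2, smul_dotProduct, dotProduct_smul, sub_dotProduct, dotProduct_sub,
      ee00, ee01, ee10, ee11, smul_eq_mul]
    field_simp
    linear_combination -hr
  have v12 : v1 d ⬝ᵥ v2 d = 0 := by
    simp only [v1, v2, smul_dotProduct, dotProduct_smul, add_dotProduct, dotProduct_sub,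
      ee00, ee01, ee10, ee11, smul_eq_mul]
    ring
  have v21 : v2 d ⬝ᵥ v1 d = 0 := by rw [dotProduct_comm]; exact v12
  have v1e2 : v1 d ⬝ᵥ e d 2 = 0 := by
    simp only [v1, smul_dotProduct, add_dotProduct, ee02, ee12, smul_eq_mul]
    ring
  have e2v1 : e d 2 ⬝ᵥ v1 d = 0 := by rw [dotProduct_comm]; exact v1e2
  have v2e2 : v2 d ⬝ᵥ e d 2 = 0 := by
    simp only [v2, smul_dotProduct, sub_dotProduct, ee02, ee12, smul_eq_mul]
    ring
  have e2v2 : e d 2 ⬝ᵥ v2 d = 0 := by rw [dotProduct_comm]; exact v2e2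
  have v1q : v1 d ⬝ᵥ qv d = 0 := by
    simp only [v1, smul_dotProduct, add_dotProduct, eq0, eq1, smul_eq_mul]
    ring
  have qv1 : qv d ⬝ᵥ v1 d = 0 := by rw [dotProduct_comm]; exact v1q
  have v2q : v2 d ⬝ᵥ qv d = 0 := by
    simp only [v2, smul_dotProduct, sub_dotProduct, eq0, eq1, smul_eq_mul]
    ring
  have qv2 : qv d ⬝ᵥ v2 d = 0 := by rw [dotProduct_comm]; exact v2q
  -- dot products with w
  have ww : wv d ⬝ᵥ wv d = 1 := by
    simp only [wv, smul_dotProduct, dotProduct_smul, add_dotProduct, dotProduct_add,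
      ee22, eq2, qe2, qq, smul_eq_mul]
    field_simp
    linear_combination -hr
  have v1w : v1 d ⬝ᵥ wv d = 0 := by
    simp only [wv, dotProduct_smul, dotProduct_add, v1e2, v1q, smul_eq_mul]
    ring
  have wv1 : wv d ⬝ᵥ v1 d = 0 := by rw [dotProduct_comm]; exact v1w
  have v2w : v2 d ⬝ᵥ wv d = 0 := by
    simp only [wv, dotProduct_smul, dotProduct_add, v2e2, v2q, smul_eq_mul]
    ring
  have wv2 : wv d ⬝ᵥ v2 d = 0 := by rw [dotProduct_comm]; exact v2w
  have qw : qv d ⬝ᵥ wv d = (Real.sqrt 2)⁻¹ := by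
    simp only [wv, dotProduct_smul, dotProduct_add, qe2, qq, smul_eq_mul]
    ring
  have wq : wv d ⬝ᵥ qv d = (Real.sqrt 2)⁻¹ := by rw [dotProduct_comm]; exact qw
  have e2w : e d 2 ⬝ᵥ wv d = (Real.sqrt 2)⁻¹ := by
    simp only [wv, dotProduct_smul, dotProduct_add, ee22, eq2, smul_eq_mul]
    ring
  have we2 : wv d ⬝ᵥ e d 2 = (Real.sqrt 2)⁻¹ := by rw [dotProduct_comm]; exact e2w
  -- dot products with u and t
  have ut : uv d Δ ⬝ᵥ tv d Δ = 0 := by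
    simp only [uv, tv, smul_dotProduct, dotProduct_smul, add_dotProduct, dotProduct_sub,
      v11, v1e2, e2v1, ee22, smul_eq_mul]
    ring
  have uq : uv d Δ ⬝ᵥ qv d = 0 := by
    simp only [uv, add_dotProduct, smul_dotProduct, v1q, eq2, smul_eq_mul]
    ring
  have uv1 : uv d Δ ⬝ᵥ v1 d = Real.sqrt (1-Δ) := by
    simp only [uv, add_dotProduct, smul_dotProduct, v11, e2v1, smul_eq_mul]
    ring
  have uv2 : uv d Δ ⬝ᵥ v2 d = 0 := by
    simp only [uv, add_dotProduct, smul_dotProduct, v12, e2v2, smul_eq_mul]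
    ring
  have uw : uv d Δ ⬝ᵥ wv d = Real.sqrt Δ * (Real.sqrt 2)⁻¹ := by
    simp only [uv, add_dotProduct, smul_dotProduct, v1w, e2w, smul_eq_mul]
    ring
  have tt : tv d Δ ⬝ᵥ tv d Δ = 1 := by
    simp only [tv, sub_dotProduct, dotProduct_sub, smul_dotProduct, dotProduct_smul,
      v11, v1e2, e2v1, ee22, smul_eq_mul]
    linear_combination hδ + hδ'
  have tq : tv d Δ ⬝ᵥ qv d = 0 := by
    simp only [tv, sub_dotProduct, smul_dotProduct, v1q, eq2, smul_eq_mul]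
    ring
  have qt : qv d ⬝ᵥ tv d Δ = 0 := by rw [dotProduct_comm]; exact tq
  have v1t : v1 d ⬝ᵥ tv d Δ = Real.sqrt Δ := by
    simp only [tv, dotProduct_sub, dotProduct_smul, v11, v1e2, smul_eq_mul]
    ring
  have v2t : v2 d ⬝ᵥ tv d Δ = 0 := by
    simp only [tv, dotProduct_sub, dotProduct_smul, v21, v2e2, smul_eq_mul]
    ring
  have wt : wv d ⬝ᵥ tv d Δ = -(Real.sqrt (1-Δ) * (Real.sqrt 2)⁻¹) := by
    simp only [tv, dotProduct_sub, dotProduct_smul, wv1, we2, smul_eq_mul]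
    ring
  -- action of P and Σ
  have hP : ∀ x, Pm d Δ *ᵥ x = x - (uv d Δ ⬝ᵥ x) • uv d Δ := by
    intro x
    unfold Pm
    rw [sub_mulVec, one_mulVec, vecMulVec_mulVec']
  have hS : ∀ x, Sig d Δ γ *ᵥ x =
      (Δ⁻¹ * (v1 d ⬝ᵥ x)) • v1 d + (v2 d ⬝ᵥ x) • v2 d + ((1-γ) * (wv d ⬝ᵥ x)) • wv d := by
    intro x
    unfold Sig
    rw [add_mulVec, add_mulVec, smul_mulVec, smul_mulVec,
      vecMulVec_mulVec', vecMulVec_mulVec', vecMulVec_mulVec', smul_smul, smul_smul]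
  have hM : ∀ x, Mm d Δ γ *ᵥ x = Pm d Δ *ᵥ (Sig d Δ γ *ᵥ (Pm d Δ *ᵥ x)) := by
    intro x
    unfold Mm
    rw [mulVec_mulVec, mulVec_mulVec]
  have hPt : Pm d Δ *ᵥ tv d Δ = tv d Δ := by rw [hP, ut, zero_smul, sub_zero]
  have hPq : Pm d Δ *ᵥ qv d = qv d := by rw [hP, uq, zero_smul, sub_zero]
  have hPv1 : Pm d Δ *ᵥ v1 d = Real.sqrt Δ • tv d Δ := by
    rw [hP, uv1]
    funext i
    simp only [uv, tv, Pi.sub_apply, Pi.add_apply, Pi.smul_apply, smul_eq_mul]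
    linear_combination (-(v1 d i)) * hδ - v1 d i * hδ'
  have hPv2 : Pm d Δ *ᵥ v2 d = v2 d := by rw [hP, uv2, zero_smul, sub_zero]
  have hPw : Pm d Δ *ᵥ wv d = (Real.sqrt 2)⁻¹ • (qv d - Real.sqrt (1-Δ) • tv d Δ) := by
    rw [hP, uw]
    funext i
    simp only [uv, tv, wv, Pi.sub_apply, Pi.add_apply, Pi.smul_apply, smul_eq_mul]
    linear_combination (-(Real.sqrt 2)⁻¹ * e d 2 i) * hδ + (-(Real.sqrt 2)⁻¹ * e d 2 i) * hδ'
  -- the three key images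
  have hMt : Mm d Δ γ *ᵥ tv d Δ =
      (1 + (1-γ)*(1-Δ)/2) • tv d Δ + (-((1-γ)*Real.sqrt (1-Δ)/2)) • qv d := by
    rw [hM, hPt, hS, v1t, v2t, wt, mulVec_add, mulVec_add, mulVec_smul, mulVec_smul,
      mulVec_smul, hPv1, hPv2, hPw]
    match_scalars
    · linear_combination Δ⁻¹ * hδ + hΔi + ((1-γ) * ((Real.sqrt 2)⁻¹*(Real.sqrt 2)⁻¹)) * hδ' +
        ((1-γ)*(1-Δ)) * hhalf
    · ring
    · linear_combination (-((1-γ)*Real.sqrt (1-Δ))) * hhalf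
  have hMq : Mm d Δ γ *ᵥ qv d =
      (-((1-γ)*Real.sqrt (1-Δ)/2)) • tv d Δ + ((1-γ)/2) • qv d := by
    rw [hM, hPq, hS, v1q, v2q, wq, mulVec_add, mulVec_add, mulVec_smul, mulVec_smul,
      mulVec_smul, hPv1, hPv2, hPw]
    match_scalars
    · linear_combination (-((1-γ)*Real.sqrt (1-Δ))) * hhalf
    · ring
    · linear_combination (1-γ) * hhalf
  have hMv2 : Mm d Δ γ *ᵥ v2 d = v2 d := by
    rw [hM, hPv2, hS, v12, v22, wv2, mul_zero, zero_smul, mul_zero, zero_smul, one_smul,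
      zero_add, add_zero, hPv2]
  -- membership facts
  have htmem : tv d Δ ∈ Submodule.span ℝ {tv d Δ, v2 d, qv d} :=
    Submodule.subset_span (by simp)
  have hv2mem : v2 d ∈ Submodule.span ℝ {tv d Δ, v2 d, qv d} :=
    Submodule.subset_span (by simp)
  have hqmem : qv d ∈ Submodule.span ℝ {tv d Δ, v2 d, qv d} :=
    Submodule.subset_span (by simp)
  refine ⟨?_, ?_, ?_, ?_, ?_⟩
  · apply le_antisymm
    · rintro y ⟨x, rfl⟩
      rw [mulVecLin_apply, hM, hS, mulVec_add, mulVec_add, mulVec_smul, mulVec_smul,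
        mulVec_smul, hPv1, hPv2, hPw]
      refine Submodule.add_mem _ (Submodule.add_mem _ ?_ ?_) ?_
      · exact Submodule.smul_mem _ _ (Submodule.smul_mem _ _ htmem)
      · exact Submodule.smul_mem _ _ hv2mem
      · refine Submodule.smul_mem _ _ (Submodule.smul_mem _ _ ?_)
        exact Submodule.sub_mem _ hqmem (Submodule.smul_mem _ _ htmem)
    · rw [Submodule.span_le]
      rintro y hy
      simp only [Set.mem_insert_iff, Set.mem_singleton_iff] at hy
      rcases hy with rfl | rfl | rfl
      · refine ⟨tv d Δ + Real.sqrt (1-Δ) • qv d, ?_⟩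
        rw [mulVecLin_apply, mulVec_add, mulVec_smul, hMt, hMq]
        match_scalars
        · linear_combination (-((1-γ)/2)) * hδ'
        · ring
      · exact ⟨v2 d, by rw [mulVecLin_apply, hMv2]⟩
      · refine ⟨Real.sqrt (1-Δ) • tv d Δ + (2*(1 + (1-γ)*(1-Δ)/2)/(1-γ)) • qv d, ?_⟩
        rw [mulVecLin_apply, mulVec_add, mulVec_smul, mulVec_smul, hMt, hMq]
        match_scalars
        · linear_combination (-((1+(1-γ)*(1-Δ)/2)*Real.sqrt (1-Δ))) * hγi
        · linear_combination (-((1-γ)/2)) * hδ' + (1+(1-γ)*(1-Δ)/2) * hγi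
  · rw [hMt, dotProduct_add, dotProduct_smul, dotProduct_smul, tt, tq, smul_eq_mul,
      smul_eq_mul]
    ring
  · rw [hMq, dotProduct_add, dotProduct_smul, dotProduct_smul, tt, tq, smul_eq_mul,
      smul_eq_mul]
    ring
  · rw [hMt, dotProduct_add, dotProduct_smul, dotProduct_smul, qt, qq, smul_eq_mul,
      smul_eq_mul]
    ring
  · rw [hMq, dotProduct_add, dotProduct_smul, dotProduct_smul, qt, qq, smul_eq_mul,
      smul_eq_mul]
    ring

end DeflationBarrierExample
end
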